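/- arXiv:2108.12223 — 13 statements merged into one kernel-verified Lean document; each statement's English description precedes it below -/
import Mathlib

section
/- Let n ≥ 1 and let μ_1, …, μ_n satisfy 0 < μ_1 ≤ μ_2 ≤ … ≤ μ_n. Let D be the first canonical form matrix of μ and let π be a probability vector with π_1 > 0 such that (π, D) represents the unit exponential distribution. Then μ_1 = 1. -/
/-! If `π exp(tD) 𝟙 = e^{-t}` on `[0, ∞)`, the vectors `v` for which `t ↦ π exp(tD) v` is a
multiple of `e^{-t}` on `[0, ∞)` form a subspace containing `𝟙`; differentiating shows that it is
`D`-invariant and that `π D v = -π v` on it. For the first canonical form with nonzero rates, `𝟙`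
is a cyclic vector of `D` (`D 𝟙 = -μₙ eₙ` and `D e_{j+1} = μ_j e_j - μ_{j+1} e_{j+1}`), so this
subspace is everything and `π D = -π`. The first coordinate of this identity is `-μ₁ π₁ = -π₁`. -/

open Matrix

/-- The first canonical form matrix of rates `μ`: diagonal `-μ i`, superdiagonal `μ i`. -/
def canonD {n : ℕ} (μ : Fin n → ℝ) : Matrix (Fin n) (Fin n) ℝ :=
  Matrix.of fun i j => if j = i then -μ i else if (j : ℕ) = (i : ℕ) + 1 then μ i else 0

/-- `(π, D)` represents the unit exponential distribution:
`π · exp(tD) · 𝟙 = e^{-t}` for all `t ≥ 0`. -/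
def ReprUnitExp {n : ℕ} (π : Fin n → ℝ) (D : Matrix (Fin n) (Fin n) ℝ) : Prop :=
  ∀ t : ℝ, 0 ≤ t → (π ᵥ* NormedSpace.exp (t • D)) ⬝ᵥ (fun _ => 1) = Real.exp (-t)

theorem hasDerivAt_vecMul_exp_smul_dotProduct {ι : Type*} [Fintype ι] [DecidableEq ι]
    (π : ι → ℝ) (D : Matrix ι ι ℝ) (v : ι → ℝ) (t : ℝ) :
    HasDerivAt (fun s : ℝ => (π ᵥ* NormedSpace.exp (s • D)) ⬝ᵥ v)
      ((π ᵥ* NormedSpace.exp (t • D)) ⬝ᵥ (D *ᵥ v)) t := by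
  open scoped Norms.Operator in
  let L : Matrix ι ι ℝ →ₗ[ℝ] ℝ :=
    { toFun := fun M => (π ᵥ* M) ⬝ᵥ v
      map_add' := fun M N => by simp only [vecMul_add, add_dotProduct]
      map_smul' := fun c M => by simp [vecMul_smul, smul_dotProduct] }
  rw [dotProduct_mulVec, vecMul_vecMul]
  exact (LinearMap.toContinuousLinearMap L).hasFDerivAt.comp_hasDerivAt t
    (hasDerivAt_exp_smul_const (𝕂 := ℝ) D t)

theorem HasDerivAt.eq_of_eqOn_Ici {E : Type*} [NormedAddCommGroup E] [NormedSpace ℝ E]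
    {f g : ℝ → E} {f' g' : E} {a t : ℝ} (hf : HasDerivAt f f' t) (hg : HasDerivAt g g' t)
    (hfg : Set.EqOn f g (Set.Ici a)) (ht : a ≤ t) : f' = g' :=
  (uniqueDiffOn_Ici a t ht).eq_deriv _ hf.hasDerivWithinAt
    (hg.hasDerivWithinAt.congr hfg (hfg ht))

def Matrix.IsCyclicVector {ι R : Type*} [Fintype ι] [Semiring R] (D : Matrix ι ι R)
    (v : ι → R) : Prop :=
  ∀ W : Submodule R (ι → R), v ∈ W → (∀ w ∈ W, D *ᵥ w ∈ W) → W = ⊤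

section UnitExp

variable {ι : Type*} [Fintype ι] [DecidableEq ι] {π : ι → ℝ} {D : Matrix ι ι ℝ}

variable (π D) in
def unitExpSubmodule : Submodule ℝ (ι → ℝ) where
  carrier := {v | ∀ t : ℝ, 0 ≤ t →
    (π ᵥ* NormedSpace.exp (t • D)) ⬝ᵥ v = (π ⬝ᵥ v) * Real.exp (-t)}
  add_mem' hv hw t ht := by simp only [dotProduct_add, hv t ht, hw t ht, add_mul]
  zero_mem' t _ := by simp
  smul_mem' c v hv t ht := by simp only [dotProduct_smul, hv t ht, smul_eq_mul, mul_assoc]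

theorem vecMul_exp_smul_dotProduct_mulVec_of_mem {v : ι → ℝ}
    (hv : v ∈ unitExpSubmodule π D) {t : ℝ} (ht : 0 ≤ t) :
    (π ᵥ* NormedSpace.exp (t • D)) ⬝ᵥ (D *ᵥ v) = -(π ⬝ᵥ v) * Real.exp (-t) := by
  have hexp : HasDerivAt (fun s => (π ⬝ᵥ v) * Real.exp (-s)) (-(π ⬝ᵥ v) * Real.exp (-t)) t := by
    simpa using ((hasDerivAt_neg t).exp.const_mul (π ⬝ᵥ v))
  exact (hasDerivAt_vecMul_exp_smul_dotProduct π D v t).eq_of_eqOn_Ici hexp hv ht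

theorem dotProduct_mulVec_of_mem_unitExpSubmodule {v : ι → ℝ}
    (hv : v ∈ unitExpSubmodule π D) : π ⬝ᵥ (D *ᵥ v) = -(π ⬝ᵥ v) := by
  simpa using vecMul_exp_smul_dotProduct_mulVec_of_mem hv le_rfl

theorem mulVec_mem_unitExpSubmodule {v : ι → ℝ} (hv : v ∈ unitExpSubmodule π D) :
    D *ᵥ v ∈ unitExpSubmodule π D := fun t ht => by
  rw [vecMul_exp_smul_dotProduct_mulVec_of_mem hv ht,
    dotProduct_mulVec_of_mem_unitExpSubmodule hv]

end UnitExp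

theorem ReprUnitExp.vecMul_eq_neg {n : ℕ} {π : Fin n → ℝ} {D : Matrix (Fin n) (Fin n) ℝ}
    (h : ReprUnitExp π D) (hcyc : D.IsCyclicVector 1) : π ᵥ* D = -π := by
  have hone : (1 : Fin n → ℝ) ∈ unitExpSubmodule π D := fun t ht => by
    have h0 := h 0 le_rfl
    simp only [zero_smul, NormedSpace.exp_zero, vecMul_one, neg_zero, Real.exp_zero] at h0
    rw [Pi.one_def, h0, one_mul]
    exact h t ht
  have htop := hcyc _ hone fun _ => mulVec_mem_unitExpSubmodule
  ext j
  have := dotProduct_mulVec_of_mem_unitExpSubmodule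
    (htop ▸ Submodule.mem_top : Pi.single j 1 ∈ unitExpSubmodule π D)
  simp only [dotProduct_single, mul_one, mulVec_single_one] at this
  exact this

section canonD

variable {m : ℕ} (μ : Fin (m + 1) → ℝ)

theorem canonD_mulVec_castSucc (v : Fin (m + 1) → ℝ) (i : Fin m) :
    (canonD μ *ᵥ v) i.castSucc = μ i.castSucc * (v i.succ - v i.castSucc) := by
  simp only [mulVec, dotProduct, canonD, of_apply]
  rw [Fintype.sum_eq_add i.castSucc i.succ Fin.castSucc_lt_succ.ne]
  · rw [if_pos rfl, if_neg Fin.castSucc_lt_succ.ne', if_pos (by simp)]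
    ring
  · rintro j ⟨h1, h2⟩
    rw [if_neg h1, if_neg fun h => h2 (Fin.ext (by simpa using h)), zero_mul]

theorem canonD_mulVec_last (v : Fin (m + 1) → ℝ) :
    (canonD μ *ᵥ v) (Fin.last m) = -μ (Fin.last m) * v (Fin.last m) := by
  simp only [mulVec, dotProduct, canonD, of_apply]
  rw [Fintype.sum_eq_single (Fin.last m)]
  · simp
  · intro j hj
    have hj' : (j : ℕ) ≠ m := fun h => hj (Fin.ext h)
    simp [Fin.ext_iff, hj', show (j : ℕ) ≠ m + 1 by omega]

theorem canonD_mulVec_one :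
    canonD μ *ᵥ 1 = -μ (Fin.last m) • Pi.single (Fin.last m) 1 := by
  ext i
  induction i using Fin.lastCases with
  | last => simp [canonD_mulVec_last]
  | cast i => simp [canonD_mulVec_castSucc, Fin.castSucc_ne_last]

theorem canonD_mulVec_single_succ (i : Fin m) :
    canonD μ *ᵥ Pi.single i.succ 1 =
      μ i.castSucc • Pi.single i.castSucc 1 - μ i.succ • Pi.single i.succ 1 := by
  ext j
  induction j using Fin.lastCases with
  | last =>
    simp only [canonD_mulVec_last, Pi.sub_apply, Pi.smul_apply, Pi.single_apply, smul_eq_mul,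
      (Fin.castSucc_ne_last _).symm, if_false]
    split_ifs with h <;> simp [h]
  | cast j =>
    simp only [canonD_mulVec_castSucc, Pi.sub_apply, Pi.smul_apply, Pi.single_apply, smul_eq_mul,
      Fin.succ_inj, Fin.castSucc_inj]
    split_ifs <;> simp_all

theorem vecMul_canonD_zero (π : Fin (m + 1) → ℝ) : (π ᵥ* canonD μ) 0 = -μ 0 * π 0 := by
  simp only [vecMul, dotProduct, canonD, of_apply]
  rw [Fintype.sum_eq_single 0]
  · rw [if_pos rfl]
    ring
  · intro j hj
    rw [if_neg (Ne.symm hj), if_neg (by rw [Fin.val_zero]; omega), mul_zero]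

theorem isCyclicVector_one_canonD (hμ : ∀ i, μ i ≠ 0) : (canonD μ).IsCyclicVector 1 := by
  intro W hone hinv
  have hsingle : ∀ i, Pi.single i 1 ∈ W := by
    intro i
    induction i using Fin.reverseInduction with
    | last =>
      have := W.smul_mem (-μ (Fin.last m))⁻¹ (hinv _ hone)
      rwa [canonD_mulVec_one, smul_smul, inv_mul_cancel₀ (neg_ne_zero.2 (hμ _)), one_smul] at this
    | cast i ih =>
      have := W.smul_mem (μ i.castSucc)⁻¹ (W.add_mem (hinv _ ih) (W.smul_mem (μ i.succ) ih))
      rwa [canonD_mulVec_single_succ, sub_add_cancel, smul_smul, inv_mul_cancel₀ (hμ _),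
        one_smul] at this
  refine eq_top_iff.2 ((Pi.basisFun ℝ (Fin (m + 1))).span_eq ▸ Submodule.span_le.2 ?_)
  rintro _ ⟨i, rfl⟩
  simpa using hsingle i

end canonD

theorem stmt0_general {n : ℕ} (hn : 0 < n) (μ : Fin n → ℝ) (hpos : ∀ i, 0 < μ i)
    (π : Fin n → ℝ) (hπ1 : 0 < π ⟨0, hn⟩)
    (hrep : ReprUnitExp π (canonD μ)) :
    μ ⟨0, hn⟩ = 1 := by
  obtain ⟨m, rfl⟩ : ∃ m, n = m + 1 := ⟨n - 1, by omega⟩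
  have h := congrFun (hrep.vecMul_eq_neg (isCyclicVector_one_canonD μ fun i => (hpos i).ne')) 0
  rw [vecMul_canonD_zero, Pi.neg_apply] at h
  exact mul_right_cancel₀ hπ1.ne' (by linarith : μ 0 * π 0 = 1 * π 0)

theorem stmt0 {n : ℕ} (hn : 0 < n) (μ : Fin n → ℝ) (hpos : ∀ i, 0 < μ i)
    (hmono : Monotone μ) (π : Fin n → ℝ) (hnonneg : ∀ i, 0 ≤ π i)
    (hsum : ∑ i, π i = 1) (hπ1 : 0 < π ⟨0, hn⟩)
    (hrep : ReprUnitExp π (canonD μ)) :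
    μ ⟨0, hn⟩ = 1 :=
  stmt0_general hn μ hpos π hπ1 hrep
end

section
/- Let n ≥ 1 and let μ_1, …, μ_n satisfy 0 < μ_1 ≤ μ_2 ≤ … ≤ μ_n. Let D be the first canonical form matrix of μ and let π be a probability vector such that (π, D) represents the unit exponential distribution. Then π · exp(tD) = e^{−t} · π for all t ≥ 0; equivalently, π · D = −π. In particular, with d := −D·𝟙, one has π·(D + d·π) = 0, i.e. the stationary vector φ of the process restarted with π after each absorption equals the initial vector π. -/
open Matrix

/-!
Differentiating `t ↦ π exp(tD) Dᵏ 𝟙` shows inductively that it equals `(-1)ᵏ e^{-t}` on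
`[0, ∞)`, so the moments `π Dᵏ 𝟙` at `t = 0` equal `(-1)ᵏ`. Hence `π D + π` is orthogonal to all
`Dᵏ 𝟙`. For the first canonical form, `Dᵏ⁺¹ 𝟙` vanishes in rows `i` with `i + k + 1 < n` and is
nonzero in row `n - k - 1` (the rates are positive), so these vectors span and `π D = -π`.
Then `π exp(tD) = e^{-t} π`, and `π (-D 𝟙) = π 𝟙 = 1` gives the last identity.
-/

attribute [local instance] Matrix.linftyOpNormedAddCommGroup Matrix.linftyOpNormedSpace
  Matrix.linftyOpNormedRing Matrix.linftyOpNormedAlgebra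

open NormedSpace

section Calculus

variable {m n : Type*} [Fintype m] [Fintype n]

theorem HasDerivAt.const_vecMul {F : ℝ → Matrix m n ℝ} {F' : Matrix m n ℝ} {t : ℝ}
    (hF : HasDerivAt F F' t) (π : m → ℝ) : HasDerivAt (fun u => π ᵥ* F u) (π ᵥ* F') t :=
  let L : Matrix m n ℝ →ₗ[ℝ] n → ℝ :=
    { toFun := fun M => π ᵥ* M
      map_add' := fun A B => vecMul_add A B π
      map_smul' := fun c A => vecMul_smul π c A }
  L.toContinuousLinearMap.hasFDerivAt.comp_hasDerivAt t hF

theorem HasDerivAt.dotProduct_const {w : ℝ → n → ℝ} {w' : n → ℝ} {t : ℝ}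
    (hw : HasDerivAt w w' t) (v : n → ℝ) : HasDerivAt (fun u => w u ⬝ᵥ v) (w' ⬝ᵥ v) t :=
  HasDerivAt.fun_sum fun i _ => (hasDerivAt_pi.1 hw i).mul_const (v i)

end Calculus

section MatrixExp

variable {ι : Type*} [Fintype ι] [DecidableEq ι]

theorem vecMul_exp_smul_dotProduct_pow_mulVec {π v : ι → ℝ} {A : Matrix ι ι ℝ}
    (h : ∀ t : ℝ, 0 ≤ t → (π ᵥ* exp (t • A)) ⬝ᵥ v = Real.exp (-t)) (k : ℕ) :
    ∀ t : ℝ, 0 ≤ t → (π ᵥ* exp (t • A)) ⬝ᵥ (A ^ k *ᵥ v) = (-1) ^ k * Real.exp (-t) := by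
  induction k with
  | zero => simpa using h
  | succ k ih =>
    intro t ht
    have hderiv : HasDerivWithinAt (fun u => (π ᵥ* exp (u • A)) ⬝ᵥ (A ^ k *ᵥ v))
        ((π ᵥ* exp (t • A)) ⬝ᵥ (A ^ (k + 1) *ᵥ v)) (Set.Ici t) t := by
      have := (((hasDerivAt_exp_smul_const A t).const_vecMul π).dotProduct_const
        (A ^ k *ᵥ v)).hasDerivWithinAt (s := Set.Ici t)
      rwa [← vecMul_vecMul, ← dotProduct_mulVec, mulVec_mulVec, ← pow_succ'] at this
    have hderiv' : HasDerivWithinAt (fun u => (-1) ^ k * Real.exp (-u))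
        ((-1) ^ (k + 1) * Real.exp (-t)) (Set.Ici t) t := by
      refine (((Real.hasDerivAt_exp (-t)).comp t (hasDerivAt_neg t)).const_mul
        ((-1 : ℝ) ^ k)).hasDerivWithinAt.congr_deriv ?_
      ring
    exact (uniqueDiffWithinAt_Ici t).eq_deriv _ hderiv
      (hderiv'.congr_of_mem (fun u hu => ih u (ht.trans hu)) Set.self_mem_Ici)

theorem dotProduct_pow_mulVec_eq_neg_one_pow {π v : ι → ℝ} {A : Matrix ι ι ℝ}
    (h : ∀ t : ℝ, 0 ≤ t → (π ᵥ* exp (t • A)) ⬝ᵥ v = Real.exp (-t)) (k : ℕ) :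
    π ⬝ᵥ (A ^ k *ᵥ v) = (-1) ^ k := by
  simpa using vecMul_exp_smul_dotProduct_pow_mulVec h k 0 le_rfl

theorem vecMul_exp_smul_of_vecMul_eq_smul {π : ι → ℝ} {A : Matrix ι ι ℝ} {c : ℝ}
    (h : π ᵥ* A = c • π) (t : ℝ) : π ᵥ* exp (t • A) = Real.exp (c * t) • π := by
  set g : ℝ → ι → ℝ := fun u => Real.exp (-(c * u)) • (π ᵥ* exp (u • A))
  have hg : ∀ u, HasDerivAt g 0 u := by
    intro u
    have hscalar : HasDerivAt (fun u => Real.exp (-(c * u))) (Real.exp (-(c * u)) * -c) u := by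
      simpa using ((hasDerivAt_id u).const_mul c).neg.exp
    refine (hscalar.smul ((hasDerivAt_exp_smul_const' A u).const_vecMul π)).congr_deriv ?_
    rw [← vecMul_vecMul, h, smul_vecMul, smul_smul, ← add_smul, mul_neg, add_neg_cancel,
      zero_smul]
  have hconst := is_const_of_deriv_eq_zero (fun u => (hg u).differentiableAt)
    (fun u => (hg u).deriv) t 0
  simp only [g, mul_zero, neg_zero, Real.exp_zero, zero_smul, exp_zero, vecMul_one,
    one_smul] at hconst
  simpa [smul_smul, ← Real.exp_add] using congrArg (Real.exp (c * t) • ·) hconst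

end MatrixExp

section CanonD

variable {n : ℕ} (μ : Fin n → ℝ)

theorem canonD_mulVec_apply_of_lt (v : Fin n → ℝ) {i : Fin n} (h : (i : ℕ) + 1 < n) :
    (canonD μ *ᵥ v) i = μ i * (v ⟨i + 1, h⟩ - v i) := by
  have hrow : canonD μ i = Pi.single i (-μ i) + Pi.single ⟨i + 1, h⟩ (μ i) := by
    ext j
    simp only [canonD, of_apply, Pi.add_apply, Pi.single_apply, Fin.ext_iff]
    split_ifs <;> first | omega | simp
  simp only [mulVec, hrow, add_dotProduct, single_dotProduct]
  ring

theorem canonD_mulVec_apply_of_eq (v : Fin n → ℝ) {i : Fin n} (h : (i : ℕ) + 1 = n) :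
    (canonD μ *ᵥ v) i = -μ i * v i := by
  have hrow : canonD μ i = Pi.single i (-μ i) := by
    ext j
    simp only [canonD, of_apply, Pi.single_apply, Fin.ext_iff]
    split_ifs <;> first | omega | simp
  simp only [mulVec, hrow, single_dotProduct]

theorem canonD_pow_succ_mulVec_one_apply_eq_zero (k : ℕ) {i : Fin n} (h : (i : ℕ) + k + 1 < n) :
    (canonD μ ^ (k + 1) *ᵥ fun _ => 1) i = 0 := by
  induction k generalizing i with
  | zero => simp [canonD_mulVec_apply_of_lt μ _ h]
  | succ k ih =>
    rw [pow_succ', ← mulVec_mulVec, canonD_mulVec_apply_of_lt μ _ (by omega),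
      ih (i := ⟨i + 1, by omega⟩) (by simp only; omega), ih (by omega)]
    ring

theorem canonD_pow_succ_mulVec_one_apply_ne_zero (hpos : ∀ i, 0 < μ i) (k : ℕ) {i : Fin n}
    (h : (i : ℕ) + k + 1 = n) : (canonD μ ^ (k + 1) *ᵥ fun _ => 1) i ≠ 0 := by
  induction k generalizing i with
  | zero => simpa [canonD_mulVec_apply_of_eq μ _ h] using (hpos i).ne'
  | succ k ih =>
    rw [pow_succ', ← mulVec_mulVec, canonD_mulVec_apply_of_lt μ _ (by omega),
      canonD_pow_succ_mulVec_one_apply_eq_zero μ k (i := i) (by omega), sub_zero]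
    exact mul_ne_zero (hpos i).ne' (ih (by simp only; omega))

theorem eq_zero_of_dotProduct_canonD_pow_mulVec_one (hpos : ∀ i, 0 < μ i) {w : Fin n → ℝ}
    (hw : ∀ k : ℕ, w ⬝ᵥ (canonD μ ^ k *ᵥ fun _ => 1) = 0) : w = 0 := by
  funext i
  induction i using WellFoundedGT.induction with
  | _ i ih =>
    have hk : (i : ℕ) + (n - i - 1) + 1 = n := by omega
    have hsingle : w ⬝ᵥ (canonD μ ^ (n - i - 1 + 1) *ᵥ fun _ => 1)
        = w i * (canonD μ ^ (n - i - 1 + 1) *ᵥ fun _ => 1) i := by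
      refine Finset.sum_eq_single i (fun j _ hji => ?_) (by simp)
      rcases lt_or_gt_of_ne hji with hj | hj
      · rw [canonD_pow_succ_mulVec_one_apply_eq_zero μ _ (by omega), mul_zero]
      · simp [ih j hj]
    have := hw (n - i - 1 + 1)
    rw [hsingle] at this
    exact (mul_eq_zero.1 this).resolve_right
      (canonD_pow_succ_mulVec_one_apply_ne_zero μ hpos _ hk)

end CanonD

theorem stmt2_general {n : ℕ} (μ : Fin n → ℝ) (hpos : ∀ i, 0 < μ i) (π : Fin n → ℝ)
    (hsum : ∑ i, π i = 1) (hrep : ReprUnitExp π (canonD μ)) :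
    (∀ t : ℝ, 0 ≤ t →
        π ᵥ* NormedSpace.exp (t • canonD μ) = Real.exp (-t) • π) ∧
      π ᵥ* canonD μ = -π ∧
      π ᵥ* (canonD μ +
          Matrix.vecMulVec ((-(canonD μ)) *ᵥ (fun _ => 1)) π) = 0 := by
  have hmoments := dotProduct_pow_mulVec_eq_neg_one_pow hrep
  have hπD : π ᵥ* canonD μ = -π := by
    rw [eq_neg_iff_add_eq_zero]
    refine eq_zero_of_dotProduct_canonD_pow_mulVec_one μ hpos fun k => ?_
    rw [add_dotProduct, ← dotProduct_mulVec, mulVec_mulVec, ← pow_succ', hmoments, hmoments,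
      pow_succ]
    ring
  refine ⟨fun t _ => ?_, hπD, ?_⟩
  · simpa using vecMul_exp_smul_of_vecMul_eq_smul (c := -1) (by simpa using hπD) t
  · have hexit : π ⬝ᵥ (-canonD μ *ᵥ fun _ => 1) = 1 := by
      rw [dotProduct_mulVec, vecMul_neg, hπD, neg_neg]
      simpa [dotProduct] using hsum
    rw [vecMul_add, vecMul_vecMulVec, hexit, one_smul, hπD, neg_add_cancel]

theorem stmt2 {n : ℕ} (hn : 0 < n) (μ : Fin n → ℝ) (hpos : ∀ i, 0 < μ i)
    (hmono : Monotone μ) (π : Fin n → ℝ) (hnonneg : ∀ i, 0 ≤ π i)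
    (hsum : ∑ i, π i = 1) (hrep : ReprUnitExp π (canonD μ)) :
    (∀ t : ℝ, 0 ≤ t →
        π ᵥ* NormedSpace.exp (t • canonD μ) = Real.exp (-t) • π) ∧
      π ᵥ* canonD μ = -π ∧
      π ᵥ* (canonD μ +
          Matrix.vecMulVec ((-(canonD μ)) *ᵥ (fun _ => 1)) π) = 0 :=
  stmt2_general μ hpos π hsum hrep
end

section
/- Let n ≥ 1 and let μ_1, …, μ_n satisfy 1 = μ_1 ≤ μ_2 ≤ … ≤ μ_n. Define π_i := (1/μ_i) · ∏_{j=i+1}^{n} (1 − 1/μ_j) for 1 ≤ i ≤ n (the empty product for i = n being 1). Then π is a probability vector and (π, D(μ)) represents the unit exponential distribution, where D(μ) is the first canonical form matrix of μ. -/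
/-!
Write `T k := ∏_{j ≥ k} (1 - 1/μ_j)`, so that `μ_i π_i = T (i+1)` and `π_i = T (i+1) - T i`.
Then `∑ π_i` telescopes to `T n - T 0 = 1 - 0` (the factor `1 - 1/μ_1` vanishes), and
`(π D)_j = μ_{j-1} π_{j-1} - μ_j π_j = T j - T (j+1) = -π_j`: `π` is a left eigenvector of
`D(μ)` for the eigenvalue `-1`. Hence `π exp(tD) = e^{-t} π`, and `π exp(tD) 𝟙 = e^{-t}`.
-/

open Matrix

open scoped Norms.Operator in
theorem vecMul_exp_of_vecMul_eq_smul {m : Type*} [Fintype m] [DecidableEq m] {v : m → ℝ}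
    {A : Matrix m m ℝ} {c : ℝ} (h : v ᵥ* A = c • v) :
    v ᵥ* NormedSpace.exp A = Real.exp c • v := by
  have hrow (M : Matrix m m ℝ) (i j : m) : (replicateRow m v * M) i j = (v ᵥ* M) j := rfl
  have hsemiconj : SemiconjBy (replicateRow m v) A (algebraMap ℝ _ c) := by
    ext i j
    simpa [hrow, Algebra.algebraMap_eq_smul_one] using congrFun h j
  ext j
  have hexp := congrFun (congrFun hsemiconj.exp_right j) j
  rw [← NormedSpace.algebraMap_exp_comm, ← Real.exp_eq_exp_ℝ] at hexp
  -- `hexp` lives in the operator-norm ring structure, the goal in the default one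
  convert hexp using 1
  · rfl
  · simp [Algebra.algebraMap_eq_smul_one]

theorem sum_ite_val_eq_succ {M : Type*} [AddCommMonoid M] {n : ℕ} {f : ℕ → M} (hf : f 0 = 0)
    (j : Fin n) : (∑ i : Fin n, if (j : ℕ) = i + 1 then f (i + 1) else 0) = f j := by
  obtain ⟨_ | k, hk⟩ := j
  · simp [hf]
  · rw [Finset.sum_eq_single ⟨k, by omega⟩]
    · simp
    · intro i _ hik
      rw [if_neg]
      intro hki
      exact hik (Fin.ext (by simp only at hki ⊢; omega))
    · simp

namespace CanonicalForm

variable {n : ℕ} (μ : Fin n → ℝ)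

noncomputable def tailProd (k : ℕ) : ℝ :=
  ∏ j ∈ Finset.univ.filter (fun j : Fin n => k ≤ j), (1 - 1 / μ j)

noncomputable def initVec (i : Fin n) : ℝ :=
  (1 / μ i) * ∏ j ∈ Finset.Ioi i, (1 - 1 / μ j)

theorem tailProd_of_le {k : ℕ} (hk : n ≤ k) : tailProd μ k = 1 :=
  Finset.prod_eq_one fun j hj => absurd (Finset.mem_filter.1 hj).2 (by omega)

variable {μ} in
theorem tailProd_eq_zero {i : Fin n} (hi : μ i = 1) {k : ℕ} (hk : k ≤ i) :
    tailProd μ k = 0 :=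
  Finset.prod_eq_zero (i := i) (by simpa using hk) (by simp [hi])

theorem tailProd_eq_mul_succ (i : Fin n) :
    tailProd μ i = (1 - 1 / μ i) * tailProd μ (i + 1) := by
  have hsplit : Finset.univ.filter (fun j : Fin n => (i : ℕ) ≤ j) =
      insert i (Finset.univ.filter fun j : Fin n => (i : ℕ) + 1 ≤ j) := by
    ext j
    simp only [Finset.mem_filter, Finset.mem_univ, true_and, Finset.mem_insert, Fin.ext_iff]
    omega
  rw [tailProd, hsplit, Finset.prod_insert (by simp)]
  rfl

variable {μ} in
theorem mul_initVec {i : Fin n} (hi : μ i ≠ 0) : μ i * initVec μ i = tailProd μ (i + 1) := by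
  have hIoi : Finset.Ioi i = Finset.univ.filter fun j : Fin n => (i : ℕ) + 1 ≤ j := by
    ext j
    simp only [Finset.mem_Ioi, Finset.mem_filter, Finset.mem_univ, true_and, Fin.lt_def]
    omega
  rw [initVec, ← mul_assoc, mul_one_div_cancel hi, one_mul, hIoi]
  rfl

variable {μ} in
theorem initVec_eq_sub {i : Fin n} (hi : μ i ≠ 0) :
    initVec μ i = tailProd μ (i + 1) - tailProd μ i := by
  rw [tailProd_eq_mul_succ, ← mul_initVec hi]
  field_simp
  ring

variable {μ} in
theorem sum_initVec (hμ : ∀ i, μ i ≠ 0) : ∑ i, initVec μ i = tailProd μ n - tailProd μ 0 := by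
  simp_rw [initVec_eq_sub (hμ _)]
  rw [Fin.sum_univ_eq_sum_range (fun k => tailProd μ (k + 1) - tailProd μ k),
    Finset.sum_range_sub]

variable {μ} in
theorem initVec_nonneg (hμ : ∀ i, 1 ≤ μ i) (i : Fin n) : 0 ≤ initVec μ i := by
  have hpos (j : Fin n) : 0 < μ j := one_pos.trans_le (hμ j)
  exact mul_nonneg (one_div_pos.2 (hpos i)).le
    (Finset.prod_nonneg fun j _ => sub_nonneg.2 ((div_le_one (hpos j)).2 (hμ j)))

theorem vecMul_canonD_apply (v : Fin n → ℝ) (j : Fin n) :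
    (v ᵥ* canonD μ) j = (∑ i : Fin n, if (j : ℕ) = i + 1 then μ i * v i else 0) - μ j * v j := by
  have hentry (i : Fin n) : v i * canonD μ i j =
      (if (j : ℕ) = i + 1 then μ i * v i else 0) - (if j = i then μ j * v j else 0) := by
    by_cases hji : j = i
    · subst hji
      simp [canonD, mul_comm]
    · simp [canonD, hji, mul_comm]
  simp only [vecMul, dotProduct, hentry, Finset.sum_sub_distrib, Finset.sum_ite_eq,
    Finset.mem_univ, if_true]

variable {μ} in
theorem initVec_vecMul_canonD (hμ : ∀ i, μ i ≠ 0) (h0 : tailProd μ 0 = 0) :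
    initVec μ ᵥ* canonD μ = -initVec μ := by
  ext j
  have hshift : (∑ i : Fin n, if (j : ℕ) = i + 1 then μ i * initVec μ i else 0) =
      ∑ i : Fin n, if (j : ℕ) = i + 1 then tailProd μ (i + 1) else 0 :=
    Finset.sum_congr rfl fun i _ => by rw [mul_initVec (hμ i)]
  rw [vecMul_canonD_apply, hshift, sum_ite_val_eq_succ h0, mul_initVec (hμ j), Pi.neg_apply,
    initVec_eq_sub (hμ j), neg_sub]

end CanonicalForm

open CanonicalForm in
theorem stmt3 {n : ℕ} (hn : 0 < n) (μ : Fin n → ℝ) (hμ1 : μ ⟨0, hn⟩ = 1)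
    (hmono : Monotone μ) (π : Fin n → ℝ)
    (hπ : ∀ i, π i = (1 / μ i) * ∏ j ∈ Finset.Ioi i, (1 - 1 / μ j)) :
    (∀ i, 0 ≤ π i) ∧ ∑ i, π i = 1 ∧ ReprUnitExp π (canonD μ) := by
  obtain rfl : π = initVec μ := funext hπ
  have hμ (i : Fin n) : 1 ≤ μ i := hμ1 ▸ hmono (Fin.mk_le_of_le_val (Nat.zero_le _))
  have hμ0 (i : Fin n) : μ i ≠ 0 := by linarith [hμ i]
  have h0 : tailProd μ 0 = 0 := tailProd_eq_zero hμ1 le_rfl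
  have hsum : ∑ i, initVec μ i = 1 := by
    rw [sum_initVec hμ0, tailProd_of_le μ le_rfl, h0, sub_zero]
  refine ⟨initVec_nonneg hμ, hsum, fun t _ => ?_⟩
  have heig : initVec μ ᵥ* (t • canonD μ) = (-t) • initVec μ := by
    rw [vecMul_smul, initVec_vecMul_canonD hμ0 h0, smul_neg, neg_smul]
  rw [vecMul_exp_of_vecMul_eq_smul heig, smul_dotProduct]
  rw [← Pi.one_def, dotProduct_one, hsum, smul_eq_mul, mul_one]
end

section
/- Let n ≥ 1 and let μ_1, …, μ_n satisfy 1 = μ_1 ≤ μ_2 ≤ … ≤ μ_n, and define π_i := (1/μ_i) · ∏_{j=i+1}^{n} (1 − 1/μ_j) for 1 ≤ i ≤ n. Then for every real s > −1, Σ_{i=1}^{n} π_i · ∏_{j=i}^{n} μ_j/(μ_j + s) = 1/(1 + s). -/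
/-! With `g j = (μ j - 1) / (μ j + s)`, the `i`-th summand equals
`(1 - g i) * ∏_{j > i} g j / (1 + s)`, since `1 - g i = (1 + s) / (μ i + s)`. These summands
telescope to `(1 - ∏_j g j) / (1 + s)`, and the product vanishes because `μ 0 = 1`. -/

open Finset

theorem sum_one_sub_mul_prod_Ioi {ι R : Type*} [CommRing R] [Fintype ι] [LinearOrder ι]
    [LocallyFiniteOrderTop ι] (g : ι → R) :
    ∑ i, (1 - g i) * ∏ j ∈ Ioi i, g j = 1 - ∏ i, g i := by
  have h := prod_one_sub_ordered (univ : Finset ιᵒᵈ) (fun i => 1 - g (OrderDual.ofDual i))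
  simp only [sub_sub_cancel] at h
  have e : ∏ i : ιᵒᵈ, g (OrderDual.ofDual i) = ∏ i, g i :=
    Fintype.prod_equiv OrderDual.ofDual _ _ fun _ => rfl
  rw [← e, h, sub_sub_cancel]
  refine Fintype.sum_equiv OrderDual.toDual _ _ fun i => ?_
  congr 1
  exact prod_nbij' OrderDual.toDual OrderDual.ofDual (by simp) (by simp) (by simp) (by simp)
    (by simp)

section FirstCanonicalForm

variable {ι : Type*} [LinearOrder ι] [LocallyFiniteOrderTop ι] {μ : ι → ℝ} {s : ℝ}

theorem one_sub_inv_mul_div_add {m : ℝ} (hm : m ≠ 0) (hms : m + s ≠ 0) :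
    (1 - 1 / m) * (m / (m + s)) = (m - 1) / (m + s) := by
  field_simp

theorem one_sub_sub_one_div_add {m : ℝ} (hms : m + s ≠ 0) :
    1 - (m - 1) / (m + s) = (1 + s) / (m + s) := by
  field_simp
  ring

theorem firstCanonical_term_eq (hμ : ∀ j, μ j ≠ 0) (hμs : ∀ j, μ j + s ≠ 0) (hs : 1 + s ≠ 0)
    (i : ι) :
    (1 / μ i * ∏ j ∈ Ioi i, (1 - 1 / μ j)) * ∏ j ∈ Ici i, μ j / (μ j + s) =
      (1 - (μ i - 1) / (μ i + s)) * (∏ j ∈ Ioi i, (μ j - 1) / (μ j + s)) / (1 + s) := by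
  have hprod : (∏ j ∈ Ioi i, (1 - 1 / μ j)) * ∏ j ∈ Ioi i, μ j / (μ j + s) =
      ∏ j ∈ Ioi i, (μ j - 1) / (μ j + s) := by
    rw [← prod_mul_distrib]
    exact prod_congr rfl fun j _ => one_sub_inv_mul_div_add (hμ j) (hμs j)
  rw [← mul_prod_Ioi_eq_prod_Ici, one_sub_sub_one_div_add (hμs i), ← hprod]
  field_simp [hμ i, hμs i]

theorem sum_firstCanonical_laplace [Fintype ι] (hμ : ∀ j, μ j ≠ 0) (hμs : ∀ j, μ j + s ≠ 0)
    (hs : 1 + s ≠ 0) :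
    ∑ i, (1 / μ i * ∏ j ∈ Ioi i, (1 - 1 / μ j)) * ∏ j ∈ Ici i, μ j / (μ j + s) =
      (1 - ∏ i, (μ i - 1) / (μ i + s)) / (1 + s) := by
  simp only [firstCanonical_term_eq hμ hμs hs, ← sum_div,
    sum_one_sub_mul_prod_Ioi fun j => (μ j - 1) / (μ j + s)]

end FirstCanonicalForm

theorem stmt4 {n : ℕ} (hn : 0 < n) (μ : Fin n → ℝ) (hμ1 : μ ⟨0, hn⟩ = 1)
    (hmono : Monotone μ) (π : Fin n → ℝ)
    (hπ : ∀ i, π i = (1 / μ i) * ∏ j ∈ Finset.Ioi i, (1 - 1 / μ j))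
    (s : ℝ) (hs : -1 < s) :
    ∑ i, π i * ∏ j ∈ Finset.Ici i, μ j / (μ j + s) = 1 / (1 + s) := by
  have hμ_ge : ∀ j, 1 ≤ μ j := fun j => hμ1 ▸ hmono (Nat.zero_le j)
  have hμ : ∀ j, μ j ≠ 0 := fun j => by linarith [hμ_ge j]
  have hμs : ∀ j, μ j + s ≠ 0 := fun j => by linarith [hμ_ge j]
  have hvanish : ∏ i, (μ i - 1) / (μ i + s) = 0 :=
    prod_eq_zero (mem_univ ⟨0, hn⟩) (by simp [hμ1])
  simp only [hπ]
  rw [sum_firstCanonical_laplace hμ hμs (by linarith), hvanish, sub_zero]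
end

section
/- Let D be an invertible n×n real matrix with nonnegative off-diagonal entries, let d := −D·𝟙 have nonnegative entries, let π be a probability row vector, and let φ be a strictly positive row vector with φ·𝟙 = 1 and φ·(D + d·π) = 0. Define ψ := π·(−D)^{−1}·diag(d) and the n×n matrix D' by D'(i,j) := D(j,i)·φ(j)/φ(i). Then for all t ≥ 0, ψ · exp(tD') · 𝟙 = π · exp(tD) · 𝟙; in particular the time-reversed pair (ψ, D') represents the same phase-type distribution as (π, D). -/
/-!
With `Φ = diagonal φ` the reversed generator is `D' = Φ⁻¹ Dᵀ Φ`, so `exp (tD') = Φ⁻¹ exp (tD)ᵀ Φ`.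
Stationarity of `φ` reads `φ (-D) = c π` with `c = φ ⬝ᵥ d ≠ 0`, i.e. `φ = c π (-D)⁻¹`, hence
`ψ = c⁻¹ (φ * d)` entrywise. Therefore
`ψ exp (tD') 𝟙 = c⁻¹ φ exp (tD) d = π (-D)⁻¹ exp (tD) (-D) 𝟙 = π exp (tD) 𝟙`,
the last step because `exp (tD)` commutes with `D`.
-/

open Matrix

namespace Matrix

variable {ι : Type*} [Fintype ι]

theorem vecMul_neg_eq_smul_of_vecMul_add_vecMulVec_eq_zero {R : Type*} [CommRing R]
    {D : Matrix ι ι R} {φ d π : ι → R} (h : φ ᵥ* (D + vecMulVec d π) = 0) :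
    φ ᵥ* (-D) = (φ ⬝ᵥ d) • π := by
  rw [vecMul_add, vecMul_vecMulVec, add_eq_zero_iff_eq_neg] at h
  rw [vecMul_neg, h, neg_neg]

variable [DecidableEq ι]

theorem vecMul_nonsing_inv_vecMul_dotProduct_mulVec {R : Type*} [CommRing R]
    {N E : Matrix ι ι R} (hN : IsUnit N.det) (hNE : Commute N E) (x y : ι → R) :
    (x ᵥ* N⁻¹ ᵥ* E) ⬝ᵥ (N *ᵥ y) = (x ᵥ* E) ⬝ᵥ y := by
  rw [← dotProduct_mulVec, mulVec_mulVec, ← hNE.eq, ← mulVec_mulVec, dotProduct_mulVec,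
    vecMul_vecMul, nonsing_inv_mul _ hN, vecMul_one, dotProduct_mulVec]

theorem eq_diagonal_inv_mul_transpose_mul_diagonal {𝕂 : Type*} [Field 𝕂] {φ : ι → 𝕂}
    {A B : Matrix ι ι 𝕂} (hB : ∀ i j, B i j = A j i * φ j / φ i) :
    B = diagonal φ⁻¹ * Aᵀ * diagonal φ := by
  ext i j
  rw [hB, mul_diagonal, diagonal_mul, transpose_apply, Pi.inv_apply, div_eq_inv_mul]
  ring

variable {𝕂 : Type*} [NormedField 𝕂] [NormedAlgebra ℚ 𝕂] [CompleteSpace 𝕂]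

theorem exp_eq_diagonal_inv_mul_exp_transpose_mul_diagonal {φ : ι → 𝕂} (hφ : ∀ i, φ i ≠ 0)
    {A B : Matrix ι ι 𝕂} (hB : ∀ i j, B i j = A j i * φ j / φ i) :
    NormedSpace.exp B = diagonal φ⁻¹ * (NormedSpace.exp A)ᵀ * diagonal φ := by
  have hinv : (diagonal φ⁻¹)⁻¹ = diagonal φ := by
    refine inv_eq_left_inv ?_
    simp [diagonal_mul_diagonal, hφ]
  have hunit : IsUnit (diagonal φ⁻¹) := by
    simp [isUnit_iff_isUnit_det, Finset.prod_ne_zero_iff, hφ]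
  rw [eq_diagonal_inv_mul_transpose_mul_diagonal hB, ← hinv, exp_conj _ _ hunit, exp_transpose]

theorem mul_vecMul_exp_dotProduct_one_of_reversal {φ : ι → 𝕂} (hφ : ∀ i, φ i ≠ 0)
    {A B : Matrix ι ι 𝕂} (hB : ∀ i j, B i j = A j i * φ j / φ i) (v : ι → 𝕂) :
    ((φ * v) ᵥ* NormedSpace.exp B) ⬝ᵥ (fun _ => 1) = (φ ᵥ* NormedSpace.exp A) ⬝ᵥ v := by
  have hv : (φ * v) ᵥ* diagonal φ⁻¹ = v := by
    ext i
    simp [vecMul_diagonal, hφ, mul_comm (φ i)]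
  rw [exp_eq_diagonal_inv_mul_exp_transpose_mul_diagonal hφ hB, ← vecMul_vecMul, ← vecMul_vecMul,
    hv, vecMul_transpose, ← dotProduct_mulVec, ← dotProduct_mulVec φ, dotProduct_comm]
  congr
  ext i
  simp [mulVec_diagonal]

end Matrix

theorem stmt5_general {n : ℕ} (D : Matrix (Fin n) (Fin n) ℝ) (hDinv : IsUnit D.det)
    (d : Fin n → ℝ) (hd : d = (-D) *ᵥ (fun _ => 1))
    (π : Fin n → ℝ)
    (φ : Fin n → ℝ) (hφpos : ∀ i, 0 < φ i) (hφsum : ∑ i, φ i = 1)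
    (hφ : φ ᵥ* (D + Matrix.vecMulVec d π) = 0)
    (ψ : Fin n → ℝ) (hψ : ψ = π ᵥ* ((-D)⁻¹ * Matrix.diagonal d))
    (D' : Matrix (Fin n) (Fin n) ℝ) (hD' : ∀ i j, D' i j = D j i * φ j / φ i) :
    ∀ t : ℝ, 0 ≤ t →
      (ψ ᵥ* NormedSpace.exp (t • D')) ⬝ᵥ (fun _ => 1)
        = (π ᵥ* NormedSpace.exp (t • D)) ⬝ᵥ (fun _ => 1) := by
  intro t _
  have hN : IsUnit (-D).det :=
    (isUnit_iff_isUnit_det _).mp ((isUnit_iff_isUnit_det D).mpr hDinv).neg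
  set c := φ ⬝ᵥ d
  have hφc : φ = c • (π ᵥ* (-D)⁻¹) := by
    have := congrArg (· ᵥ* (-D)⁻¹) (vecMul_neg_eq_smul_of_vecMul_add_vecMulVec_eq_zero hφ)
    simpa only [vecMul_vecMul, mul_nonsing_inv _ hN, vecMul_one, smul_vecMul] using this
  have hc : c ≠ 0 := by
    rintro hc0
    simp [hφc, hc0] at hφsum
  have hψφ : ψ = φ * (c⁻¹ • d) := by
    ext i
    rw [hψ, ← vecMul_vecMul, vecMul_diagonal, hφc, Pi.mul_apply, Pi.smul_apply, Pi.smul_apply,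
      smul_eq_mul, smul_eq_mul]
    field_simp
  have hD't : ∀ i j, (t • D') i j = (t • D) j i * φ j / φ i := by
    simp [hD', mul_assoc, mul_div_assoc]
  have hDE : Commute (-D) (NormedSpace.exp (t • D)) :=
    ((Commute.refl D).smul_right t).neg_left.exp_right
  rw [hψφ, mul_vecMul_exp_dotProduct_one_of_reversal (fun i => (hφpos i).ne') hD't, hφc,
    smul_vecMul, smul_dotProduct, dotProduct_smul, smul_smul, mul_inv_cancel₀ hc, one_smul, hd,
    vecMul_nonsing_inv_vecMul_dotProduct_mulVec hN hDE]

theorem stmt5 {n : ℕ} (D : Matrix (Fin n) (Fin n) ℝ) (hDinv : IsUnit D.det)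
    (hoff : ∀ i j, i ≠ j → 0 ≤ D i j)
    (d : Fin n → ℝ) (hd : d = (-D) *ᵥ (fun _ => 1)) (hdnn : ∀ i, 0 ≤ d i)
    (π : Fin n → ℝ) (hπnn : ∀ i, 0 ≤ π i) (hπsum : ∑ i, π i = 1)
    (φ : Fin n → ℝ) (hφpos : ∀ i, 0 < φ i) (hφsum : ∑ i, φ i = 1)
    (hφ : φ ᵥ* (D + Matrix.vecMulVec d π) = 0)
    (ψ : Fin n → ℝ) (hψ : ψ = π ᵥ* ((-D)⁻¹ * Matrix.diagonal d))
    (D' : Matrix (Fin n) (Fin n) ℝ) (hD' : ∀ i j, D' i j = D j i * φ j / φ i) :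
    ∀ t : ℝ, 0 ≤ t →
      (ψ ᵥ* NormedSpace.exp (t • D')) ⬝ᵥ (fun _ => 1)
        = (π ᵥ* NormedSpace.exp (t • D)) ⬝ᵥ (fun _ => 1) :=
  stmt5_general D hDinv d hd π φ hφpos hφsum hφ ψ hψ D' hD'
end

section
/- Let D be an invertible n×n real matrix with nonnegative off-diagonal entries, let d := −D·𝟙 have nonnegative entries, let π be a probability row vector, and let φ be a strictly positive row vector with φ·𝟙 = 1 and φ·(D + d·π) = 0. Define ψ := π·(−D)^{−1}·diag(d) and D'(i,j) := D(j,i)·φ(j)/φ(i). Then D' is invertible and, with M := (−D)^{−1}, M' := (−D')^{−1} and d' := −D'·𝟙: (i) ψ_i · (M'·𝟙)_i = (π·M·M·diag(d))_i for every i, i.e. the conditional mean-absorption-time vector of the reversed representation equals the conditional exit-time vector a of the original (m' = a); and (ii) ψ·M'·diag(d') = π, i.e. the exit probability vector of the reversed representation equals the initial vector of the original (ψ' = π). -/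
/-!
The reversed matrix `D' = Φ⁻¹ Dᵀ Φ`, with `Φ = diag φ`, is similar to `Dᵀ`, so it is invertible
and `(-D')⁻¹ = Φ⁻¹ Mᵀ Φ`. Stationarity of `φ` for `D + d π` says `φ (-D) = (φ ⬝ d) π`, i.e.
`φ = (φ ⬝ d) π M`; hence `(φ ⬝ d) ψ = φ ⊙ d` and `φ M = (φ ⬝ d) π M M`. With these two identities
the reversed quantities `m'` and `ψ'` collapse coordinatewise to `a` and `π`.
-/

namespace Matrix

section TimeReversal

variable {ι K : Type*} [Fintype ι] [DecidableEq ι] [Field K]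

def timeReversal (φ : ι → K) (A : Matrix ι ι K) : Matrix ι ι K :=
  diagonal φ⁻¹ * Aᵀ * diagonal φ

theorem timeReversal_apply (φ : ι → K) (A : Matrix ι ι K) (i j : ι) :
    timeReversal φ A i j = A j i * φ j / φ i := by
  simp only [timeReversal, diagonal_mul, mul_diagonal, transpose_apply, Pi.inv_apply]
  ring

theorem neg_timeReversal (φ : ι → K) (A : Matrix ι ι K) :
    -timeReversal φ A = timeReversal φ (-A) := by
  simp only [timeReversal, transpose_neg, Matrix.mul_neg, Matrix.neg_mul]

variable {φ : ι → K}

theorem inv_diagonal_of_ne_zero (hφ : ∀ i, φ i ≠ 0) : (diagonal φ)⁻¹ = diagonal φ⁻¹ :=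
  inv_eq_left_inv <| by
    rw [diagonal_mul_diagonal, ← diagonal_one]
    exact congrArg diagonal (funext fun i => inv_mul_cancel₀ (hφ i))

theorem isUnit_diagonal_of_ne_zero (hφ : ∀ i, φ i ≠ 0) : IsUnit (diagonal φ) :=
  isUnit_diagonal.mpr (Pi.isUnit_iff.mpr fun i => (hφ i).isUnit)

theorem det_timeReversal (hφ : ∀ i, φ i ≠ 0) (A : Matrix ι ι K) :
    (timeReversal φ A).det = A.det := by
  rw [timeReversal, ← inv_diagonal_of_ne_zero hφ, det_conj' (isUnit_diagonal_of_ne_zero hφ),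
    det_transpose]

theorem inv_timeReversal (hφ : ∀ i, φ i ≠ 0) (A : Matrix ι ι K) :
    (timeReversal φ A)⁻¹ = timeReversal φ A⁻¹ := by
  have hdet : IsUnit (diagonal φ).det :=
    (isUnit_iff_isUnit_det _).mp (isUnit_diagonal_of_ne_zero hφ)
  rw [timeReversal, timeReversal, mul_inv_rev, mul_inv_rev, ← inv_diagonal_of_ne_zero hφ,
    nonsing_inv_nonsing_inv _ hdet, transpose_nonsing_inv, Matrix.mul_assoc]

theorem timeReversal_mulVec_one (φ : ι → K) (A : Matrix ι ι K) :
    timeReversal φ A *ᵥ 1 = φ⁻¹ * (φ ᵥ* A) := by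
  have hφ1 : diagonal φ *ᵥ 1 = φ := funext fun j => by rw [mulVec_diagonal, Pi.one_apply, mul_one]
  ext i
  rw [timeReversal, ← mulVec_mulVec, hφ1, ← mulVec_mulVec, mulVec_diagonal, mulVec_transpose]
  rfl

theorem vecMul_timeReversal (φ x : ι → K) (A : Matrix ι ι K) :
    x ᵥ* timeReversal φ A = A *ᵥ (x * φ⁻¹) * φ := by
  have hxφ : x ᵥ* diagonal φ⁻¹ = x * φ⁻¹ := funext (vecMul_diagonal x φ⁻¹)
  ext i
  rw [timeReversal, ← vecMul_vecMul, ← vecMul_vecMul, hxφ, vecMul_diagonal, vecMul_transpose]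
  rfl

end TimeReversal

theorem vecMul_neg_eq_of_vecMul_add_vecMulVec_eq_zero {ι R : Type*} [Fintype ι] [CommRing R]
    {A : Matrix ι ι R} {φ d π : ι → R} (h : φ ᵥ* (A + vecMulVec d π) = 0) :
    φ ᵥ* (-A) = (φ ⬝ᵥ d) • π := by
  rw [vecMul_add, vecMul_vecMulVec] at h
  rw [vecMul_neg]
  exact neg_eq_of_add_eq_zero_right h

theorem eq_smul_vecMul_inv_of_vecMul_eq_smul {ι K : Type*} [Fintype ι] [DecidableEq ι] [Field K]
    {A : Matrix ι ι K} (hA : IsUnit A.det) {φ π : ι → K} {c : K} (h : φ ᵥ* A = c • π) :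
    φ = c • (π ᵥ* A⁻¹) := by
  rw [← smul_vecMul, ← h, vecMul_vecMul, mul_nonsing_inv _ hA, vecMul_one]

end Matrix

open Matrix

theorem stmt6_general {n : ℕ} (D : Matrix (Fin n) (Fin n) ℝ) (hDinv : IsUnit D.det)
    (d : Fin n → ℝ) (hd : d = (-D) *ᵥ (fun _ => 1))
    (π : Fin n → ℝ)
    (φ : Fin n → ℝ) (hφpos : ∀ i, 0 < φ i)
    (hφ : φ ᵥ* (D + Matrix.vecMulVec d π) = 0)
    (ψ : Fin n → ℝ) (hψ : ψ = π ᵥ* ((-D)⁻¹ * Matrix.diagonal d))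
    (D' : Matrix (Fin n) (Fin n) ℝ) (hD' : ∀ i j, D' i j = D j i * φ j / φ i) :
    IsUnit D'.det ∧
      (∀ i, ψ i * ((-D')⁻¹ *ᵥ (fun _ => 1)) i
          = (π ᵥ* ((-D)⁻¹ * (-D)⁻¹ * Matrix.diagonal d)) i) ∧
      ψ ᵥ* ((-D')⁻¹ * Matrix.diagonal ((-D') *ᵥ (fun _ => 1))) = π := by
  have hφ0 : ∀ i, φ i ≠ 0 := fun i => (hφpos i).ne'
  obtain rfl : D' = timeReversal φ D := by ext i j; rw [hD', timeReversal_apply]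
  set M := (-D)⁻¹
  set c := φ ⬝ᵥ d
  have hnegD : IsUnit (-D).det := by simpa [det_neg] using hDinv
  have hφD : φ ᵥ* (-D) = c • π := vecMul_neg_eq_of_vecMul_add_vecMulVec_eq_zero hφ
  have hφM : φ = c • (π ᵥ* M) := eq_smul_vecMul_inv_of_vecMul_eq_smul hnegD hφD
  have hMd : M *ᵥ d = 1 := by rw [hd, mulVec_mulVec, nonsing_inv_mul _ hnegD, one_mulVec]; rfl
  have hcψ : ∀ i, c * ψ i = φ i * d i := fun i => by
    rw [hψ, hφM, ← vecMul_vecMul, vecMul_diagonal, Pi.smul_apply, smul_eq_mul, mul_assoc]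
  have hM' : (-timeReversal φ D)⁻¹ = timeReversal φ M := by
    rw [neg_timeReversal, inv_timeReversal hφ0]
  refine ⟨det_timeReversal hφ0 D ▸ hDinv, fun i => ?_, ?_⟩
  · rw [hM', ← Pi.one_def, timeReversal_mulVec_one, ← vecMul_vecMul, ← vecMul_vecMul,
      vecMul_diagonal, congrArg (· ᵥ* M) hφM, smul_vecMul]
    simp only [Pi.mul_apply, Pi.inv_apply, Pi.smul_apply, smul_eq_mul]
    field_simp [hφ0 i]
    linear_combination (π ᵥ* M ᵥ* M) i * hcψ i
  · have hcψφ : c • (ψ * φ⁻¹) = d := funext fun i => by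
      simp only [Pi.smul_apply, Pi.mul_apply, Pi.inv_apply, smul_eq_mul]
      field_simp [hφ0 i]
      exact hcψ i
    ext i
    rw [hM', ← Pi.one_def, neg_timeReversal, ← vecMul_vecMul, vecMul_diagonal,
      vecMul_timeReversal, timeReversal_mulVec_one, hφD]
    have hMψ := congrFun (congrArg (M *ᵥ ·) hcψφ) i
    simp only [mulVec_smul, hMd, Pi.smul_apply, Pi.mul_apply, Pi.inv_apply, smul_eq_mul,
      Pi.one_apply] at hMψ ⊢
    field_simp [hφ0 i]
    linear_combination π i * hMψ

theorem stmt6 {n : ℕ} (D : Matrix (Fin n) (Fin n) ℝ) (hDinv : IsUnit D.det)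
    (hoff : ∀ i j, i ≠ j → 0 ≤ D i j)
    (d : Fin n → ℝ) (hd : d = (-D) *ᵥ (fun _ => 1)) (hdnn : ∀ i, 0 ≤ d i)
    (π : Fin n → ℝ) (hπnn : ∀ i, 0 ≤ π i) (hπsum : ∑ i, π i = 1)
    (φ : Fin n → ℝ) (hφpos : ∀ i, 0 < φ i) (hφsum : ∑ i, φ i = 1)
    (hφ : φ ᵥ* (D + Matrix.vecMulVec d π) = 0)
    (ψ : Fin n → ℝ) (hψ : ψ = π ᵥ* ((-D)⁻¹ * Matrix.diagonal d))
    (D' : Matrix (Fin n) (Fin n) ℝ) (hD' : ∀ i j, D' i j = D j i * φ j / φ i) :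
    IsUnit D'.det ∧
      (∀ i, ψ i * ((-D')⁻¹ *ᵥ (fun _ => 1)) i
          = (π ᵥ* ((-D)⁻¹ * (-D)⁻¹ * Matrix.diagonal d)) i) ∧
      ψ ᵥ* ((-D')⁻¹ * Matrix.diagonal ((-D') *ᵥ (fun _ => 1))) = π :=
  stmt6_general D hDinv d hd π φ hφpos hφ ψ hψ D' hD'
end

section
/- Let n ≥ 1 and let μ_1, …, μ_n satisfy 1 = μ_1 ≤ μ_2 ≤ … ≤ μ_n. Let D'' be the n×n real matrix with D''(i,i) = −μ_{n−i+1} for 1 ≤ i ≤ n, D''(i,i+1) = μ_{n−i+1} − 1 for 1 ≤ i ≤ n−1, and 0 elsewhere, and let e_1 := (1,0,…,0). Then (e_1, D'') represents the unit exponential distribution. (D'' is the second canonical form representation obtained by time-reversing the first canonical form representation with rates μ and reversing the order of the states.) -/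
/-!
Every row of `canonD2 μ` sums to `-1`: the diagonal entry `-μ` cancels against the
superdiagonal entry `μ - 1`, and the last row is `-μ ⟨0, _⟩ = -1`. So `𝟙` is an eigenvector of
`t • canonD2 μ` with eigenvalue `-t`, hence of its exponential with eigenvalue `e^{-t}`, and
`e₁ ⬝ᵥ 𝟙 = 1`.
-/

open Matrix

/-- The second canonical form matrix obtained by time-reversing the first canonical
form with rates `μ` and reversing the order of the states: diagonal entries
`-μ (n-1-i)` and superdiagonal entries `μ (n-1-i) - 1` (`0`-based indexing). -/
def canonD2 {n : ℕ} (μ : Fin n → ℝ) : Matrix (Fin n) (Fin n) ℝ :=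
  Matrix.of fun i j =>
    if j = i then -μ i.rev else if (j : ℕ) = (i : ℕ) + 1 then μ i.rev - 1 else 0

namespace Matrix

variable {m : Type*} [Fintype m] [DecidableEq m]

theorem pow_mulVec_of_mulVec_eq_smul {R : Type*} [CommSemiring R] {A : Matrix m m R}
    {v : m → R} {c : R} (h : A *ᵥ v = c • v) (k : ℕ) : A ^ k *ᵥ v = c ^ k • v := by
  induction k with
  | zero => simp
  | succ k ih => rw [pow_succ, ← mulVec_mulVec, h, mulVec_smul, ih, smul_smul, pow_succ']

-- `NormedSpace.exp` depends only on the topology, so any Banach-algebra norm may be used.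
open scoped Norms.Operator in
theorem exp_mulVec_of_mulVec_eq_smul {𝕂 : Type*} [RCLike 𝕂] {A : Matrix m m 𝕂} {v : m → 𝕂}
    {c : 𝕂} (h : A *ᵥ v = c • v) : NormedSpace.exp A *ᵥ v = NormedSpace.exp c • v := by
  have hA := (NormedSpace.exp_series_hasSum_exp' (𝕂 := 𝕂) A).map (mulVec.addMonoidHomLeft v)
    (continuous_id.matrix_mulVec continuous_const)
  have hc := (NormedSpace.exp_series_hasSum_exp' (𝕂 := 𝕂) c).smul_const v
  refine hA.unique ?_
  convert hc using 2 with k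
  simp [mulVec.addMonoidHomLeft, smul_mulVec, pow_mulVec_of_mulVec_eq_smul h, smul_smul]

end Matrix

theorem canonD2_mulVec_one {n : ℕ} (hn : 0 < n) (μ : Fin n → ℝ) (hμ1 : μ ⟨0, hn⟩ = 1) :
    canonD2 μ *ᵥ 1 = -1 := by
  ext i
  simp only [mulVec, dotProduct, Pi.one_apply, mul_one, Pi.neg_apply]
  by_cases hlast : (i : ℕ) + 1 < n
  · rw [Finset.sum_eq_add i ⟨i + 1, hlast⟩ (by simp [Fin.ext_iff])]
    · simp only [canonD2, Fin.ext_iff, of_apply, ↓reduceIte, Nat.add_eq_left, one_ne_zero]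
      ring
    · intro j _ hj
      simp only [ne_eq, Fin.ext_iff] at hj
      simp [canonD2, Fin.ext_iff, hj]
    all_goals simp
  · have hrev : i.rev = ⟨0, hn⟩ := by ext; simp only [Fin.val_rev]; omega
    rw [Finset.sum_eq_single i]
    · simp [canonD2, hrev, hμ1]
    · intro j _ hj
      simp only [canonD2, of_apply, hj, ↓reduceIte, ite_eq_right_iff]
      omega
    · simp

theorem stmt7_general {n : ℕ} (hn : 0 < n) (μ : Fin n → ℝ) (hμ1 : μ ⟨0, hn⟩ = 1) :
    ReprUnitExp (fun i => if (i : ℕ) = 0 then 1 else 0) (canonD2 μ) := by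
  intro t _
  have htD : (t • canonD2 μ) *ᵥ 1 = (-t) • 1 := by
    rw [smul_mulVec, canonD2_mulVec_one hn μ hμ1, smul_neg, neg_smul]
  have hπ : (fun i : Fin n => if (i : ℕ) = 0 then (1 : ℝ) else 0) ⬝ᵥ 1 = 1 := by
    have hzero (i : Fin n) : (i : ℕ) = 0 ↔ i = ⟨0, hn⟩ := (Fin.ext_iff (b := ⟨0, hn⟩)).symm
    simp only [hzero, dotProduct_one, Finset.sum_ite_eq', Finset.mem_univ, if_true]
  rw [← dotProduct_mulVec, ← Pi.one_def, exp_mulVec_of_mulVec_eq_smul htD, ← Real.exp_eq_exp_ℝ,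
    dotProduct_smul, hπ, smul_eq_mul, mul_one]

theorem stmt7 {n : ℕ} (hn : 0 < n) (μ : Fin n → ℝ) (hμ1 : μ ⟨0, hn⟩ = 1)
    (hmono : Monotone μ) :
    ReprUnitExp (fun i => if (i : ℕ) = 0 then 1 else 0) (canonD2 μ) :=
  stmt7_general hn μ hμ1
end

section
/- Let (π, D) be a pair of a probability row vector π ∈ ℝⁿ and an n×n real matrix D that represents the unit exponential distribution, and set d := −D·𝟙. Let p ∈ (0,1), q ∈ [0,1], and μ := (1 − q + pq)/p. Define the (n+1)-dimensional row vector π' := ((1−p)·π, p) and the (n+1)×(n+1) block matrix D' := [[D, (1−q)·d], [0, −μ]] (i.e. the first n rows are (D, (1−q)d) and the last row is (0,…,0,−μ)). Then (π', D') represents the unit exponential distribution. -/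
/-!
Differentiating the survival function `t ↦ π e^{tD} 𝟙 = e^{-t}` gives `π e^{tD} d = e^{-t}` for
`t ≥ 0`. Hence the row vector `r(t) = ((1 - p) π e^{tD}, p e^{-t})` solves `r' = r D'` on
`[0, ∞)`: in the last coordinate this is `(1 - p)(1 - q) - pμ = -p`, i.e. the definition of `μ`.
Since `r(0) = π'`, uniqueness for linear ODEs gives `r(t) = π' e^{tD'}`, and `r(t) 𝟙 = e^{-t}`.
-/

open Matrix

open NormedSpace Set

namespace Matrix

variable {ι : Type*} [Fintype ι] [DecidableEq ι]

section

-- Only needed to differentiate `exp`; the statements do not depend on the norm.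
attribute [local instance] Matrix.linftyOpNormedAddCommGroup Matrix.linftyOpNormedRing
  Matrix.linftyOpNormedAlgebra

theorem hasDerivAt_vecMul_exp_smul (v : ι → ℝ) (A : Matrix ι ι ℝ) (s : ℝ) :
    HasDerivAt (fun u : ℝ => v ᵥ* exp (u • A)) (v ᵥ* exp (s • A) ᵥ* A) s := by
  rw [vecMul_vecMul]
  exact (LinearMap.toContinuousLinearMap (vecMulBilin ℝ ℝ v)).hasFDerivAt.comp_hasDerivAt s
    (hasDerivAt_exp_smul_const A s)

end

theorem eq_vecMul_exp_smul_of_hasDerivAt {A : Matrix ι ι ℝ} {r : ℝ → ι → ℝ}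
    (hr : ∀ s, 0 ≤ s → HasDerivAt r (r s ᵥ* A) s) {t : ℝ} (ht : 0 ≤ t) :
    r t = r 0 ᵥ* exp (t • A) := by
  have hexp (s : ℝ) := hasDerivAt_vecMul_exp_smul (r 0) A s
  refine ODE_solution_unique (v := fun _ x => x ᵥ* A)
    (fun _ => (LinearMap.toContinuousLinearMap (vecMulLinear A)).lipschitz)
    (fun s hs => (hr s hs.1).continuousAt.continuousWithinAt)
    (fun s hs => (hr s hs.1).hasDerivWithinAt)
    (fun s _ => (hexp s).continuousAt.continuousWithinAt)
    (fun s _ => (hexp s).hasDerivWithinAt) (by simp) ⟨ht, le_rfl⟩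

theorem snoc_vecMul_of_snoc {R : Type*} [NonUnitalNonAssocSemiring R] {n m : ℕ}
    (x : Fin n → R) (y : R) (D : Matrix (Fin n) (Fin m) R) (b : Fin n → R) (c : R) :
    (Fin.snoc x y : Fin (n + 1) → R) ᵥ*
        of (Fin.snoc (fun i => Fin.snoc (D i) (b i)) (Fin.snoc (fun _ => 0) c)) =
      Fin.snoc (x ᵥ* D) (x ⬝ᵥ b + y * c) := by
  ext j
  induction j using Fin.lastCases <;> simp [vecMul, dotProduct, Fin.sum_univ_castSucc]

end Matrix

theorem HasDerivAt.finSnoc {𝕜 : Type*} [NontriviallyNormedField 𝕜] {n : ℕ} {f : 𝕜 → Fin n → 𝕜}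
    {g : 𝕜 → 𝕜} {f' : Fin n → 𝕜} {g' s : 𝕜} (hf : HasDerivAt f f' s) (hg : HasDerivAt g g' s) :
    HasDerivAt (fun u => (Fin.snoc (f u) (g u) : Fin (n + 1) → 𝕜)) (Fin.snoc f' g') s := by
  refine hasDerivAt_pi.2 fun j => ?_
  induction j using Fin.lastCases
  · simpa using hg
  · simpa using hasDerivAt_pi.1 hf _

theorem ReprUnitExp.vecMul_exp_dotProduct_neg_mulVec_one {n : ℕ} {π : Fin n → ℝ}
    {D : Matrix (Fin n) (Fin n) ℝ} (hrep : ReprUnitExp π D) {s : ℝ} (hs : 0 ≤ s) :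
    (π ᵥ* exp (s • D)) ⬝ᵥ ((-D) *ᵥ fun _ => 1) = Real.exp (-s) := by
  have hsurv : HasDerivWithinAt (fun u => (π ᵥ* exp (u • D)) ⬝ᵥ fun _ => 1)
      ((π ᵥ* exp (s • D) ᵥ* D) ⬝ᵥ fun _ => 1) (Ici s) s :=
    ((LinearMap.toContinuousLinearMap
      ((dotProductBilin ℝ ℝ).flip fun _ : Fin n => (1 : ℝ))).hasFDerivAt.comp_hasDerivAt s
      (hasDerivAt_vecMul_exp_smul π D s)).hasDerivWithinAt
  -- one-sided, so that it also applies at `s = 0`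
  have hexp : HasDerivWithinAt (fun u => (π ᵥ* exp (u • D)) ⬝ᵥ fun _ => 1)
      (-Real.exp (-s)) (Ici s) s :=
    ((Real.hasDerivAt_exp (-s)).comp s (hasDerivAt_neg s)).hasDerivWithinAt.congr
      (fun u hu => hrep u (hs.trans hu)) (hrep s hs) |>.congr_deriv (by simp)
  rw [neg_mulVec, dotProduct_neg, dotProduct_mulVec,
    (uniqueDiffOn_Ici s s self_mem_Ici).eq_deriv _ hsurv hexp, neg_neg]

theorem stmt8_general {n : ℕ} (π : Fin n → ℝ) (D : Matrix (Fin n) (Fin n) ℝ)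
    (hrep : ReprUnitExp π D)
    (d : Fin n → ℝ) (hd : d = (-D) *ᵥ (fun _ => 1))
    (p q μ : ℝ) (hp : p ∈ Set.Ioo (0 : ℝ) 1)
    (hμ : μ = (1 - q + p * q) / p) :
    ReprUnitExp (Fin.snoc (fun i => (1 - p) * π i) p)
      (Matrix.of (Fin.snoc (fun i => Fin.snoc (D i) ((1 - q) * d i))
        (Fin.snoc (fun _ => 0) (-μ)))) := by
  set r : ℝ → Fin (n + 1) → ℝ := fun s =>
    Fin.snoc ((1 - p) • (π ᵥ* exp (s • D))) (p * Real.exp (-s))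
  have hr (s : ℝ) (hs : 0 ≤ s) : HasDerivAt r (r s ᵥ* Matrix.of (Fin.snoc
      (fun i => Fin.snoc (D i) ((1 - q) * d i)) (Fin.snoc (fun _ => 0) (-μ)))) s := by
    have hμp : p * μ = 1 - q + p * q := by rw [hμ]; field_simp [hp.1.ne']
    have hexit : (fun i => (1 - q) * d i) = (1 - q) • d := rfl
    refine (((hasDerivAt_vecMul_exp_smul π D s).const_smul (1 - p)).finSnoc
      (((Real.hasDerivAt_exp (-s)).comp s (hasDerivAt_neg s)).const_mul p)).congr_deriv ?_
    rw [snoc_vecMul_of_snoc, hexit, smul_vecMul, smul_dotProduct, dotProduct_smul, hd,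
      hrep.vecMul_exp_dotProduct_neg_mulVec_one hs]
    congr 1
    linear_combination Real.exp (-s) * hμp
  intro t ht
  have hr0 : r 0 = Fin.snoc (fun i => (1 - p) * π i) p := by
    simp only [r, zero_smul, exp_zero, vecMul_one, neg_zero, Real.exp_zero, mul_one]; rfl
  rw [← hr0, ← eq_vecMul_exp_smul_of_hasDerivAt hr ht]
  have hsurv := hrep t ht
  simp only [dotProduct, mul_one] at hsurv ⊢
  simp only [r, Fin.sum_univ_castSucc, Fin.snoc_castSucc, Fin.snoc_last, Pi.smul_apply,
    smul_eq_mul, ← Finset.mul_sum, hsurv]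
  ring

theorem stmt8 {n : ℕ} (π : Fin n → ℝ) (D : Matrix (Fin n) (Fin n) ℝ)
    (hπnn : ∀ i, 0 ≤ π i) (hπsum : ∑ i, π i = 1)
    (hrep : ReprUnitExp π D)
    (d : Fin n → ℝ) (hd : d = (-D) *ᵥ (fun _ => 1))
    (p q μ : ℝ) (hp : p ∈ Set.Ioo (0 : ℝ) 1) (hq : q ∈ Set.Icc (0 : ℝ) 1)
    (hμ : μ = (1 - q + p * q) / p) :
    ReprUnitExp (Fin.snoc (fun i => (1 - p) * π i) p)
      (Matrix.of (Fin.snoc (fun i => Fin.snoc (D i) ((1 - q) * d i))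
        (Fin.snoc (fun _ => 0) (-μ)))) :=
  stmt8_general π D hrep d hd p q μ hp hμ
end

section
/- Let (π, D) be a pair of a probability row vector π ∈ ℝⁿ and an n×n real matrix D that represents the unit exponential distribution, let μ ≥ 1 and p ∈ [0,1]. Define the (n+1)-dimensional row vector π' := (p, (1−p)·π) and the (n+1)×(n+1) block matrix D' whose first row is (−μ, (μ−1)·π) and whose remaining n rows are (0, D). Then (π', D') represents the unit exponential distribution. -/
open Matrix

/-!
The moments `π Dᵏ 𝟙` determine `t ↦ π exp(tD) 𝟙 = ∑ₖ tᵏ/k! · π Dᵏ 𝟙`, and conversely equality with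
`e^{ct}` on `[0, ∞)` forces the moments to be `cᵏ` (differentiate `k` times at `0`, one-sidedly).
So `(π, D)` represents the unit exponential iff `π Dᵏ 𝟙 = (-1)ᵏ` for all `k`. For the augmented
matrix `D'` an induction gives `D'ᵏ 𝟙 = ((-1)ᵏ, Dᵏ 𝟙)`, because the first row satisfies
`-μ (-1)ᵏ + (μ - 1) π Dᵏ 𝟙 = (-1)ᵏ⁺¹`; hence `π' D'ᵏ 𝟙 = p (-1)ᵏ + (1 - p) (-1)ᵏ = (-1)ᵏ`.
-/

open NormedSpace
open scoped Nat

namespace Matrix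

variable {ι : Type*} [Fintype ι]

noncomputable def vecMulDotProductCLM (x y : ι → ℝ) : Matrix ι ι ℝ →L[ℝ] ℝ :=
  LinearMap.toContinuousLinearMap
    { toFun := fun M => (x ᵥ* M) ⬝ᵥ y
      map_add' := fun A B => by simp only [vecMul_add, add_dotProduct]
      map_smul' := fun c M => by simp only [vecMul_smul, smul_dotProduct, RingHom.id_apply] }

@[simp]
theorem vecMulDotProductCLM_apply (x y : ι → ℝ) (M : Matrix ι ι ℝ) :
    vecMulDotProductCLM x y M = (x ᵥ* M) ⬝ᵥ y :=
  rfl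

section Exponential

variable [DecidableEq ι]

-- `exp` does not depend on the norm; a normed-algebra structure only unlocks its API.
attribute [local instance] Matrix.linftyOpNormedRing Matrix.linftyOpNormedAlgebra

theorem hasSum_vecMul_exp_smul_dotProduct (x y : ι → ℝ) (M : Matrix ι ι ℝ) (t : ℝ) :
    HasSum (fun k : ℕ => t ^ k / k ! * ((x ᵥ* M ^ k) ⬝ᵥ y)) ((x ᵥ* exp (t • M)) ⬝ᵥ y) := by
  refine ((vecMulDotProductCLM x y).hasSum (exp_series_hasSum_exp' (𝕂 := ℝ) (t • M))).congr_fun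
    fun k => ?_
  simp only [vecMulDotProductCLM_apply, smul_pow, vecMul_smul, smul_dotProduct, smul_eq_mul]
  ring

theorem hasDerivAt_vecMul_exp_smul_dotProduct (x y : ι → ℝ) (M : Matrix ι ι ℝ) (t : ℝ) :
    HasDerivAt (fun s : ℝ => (x ᵥ* exp (s • M)) ⬝ᵥ y) ((x ᵥ* (M * exp (t • M))) ⬝ᵥ y) t :=
  (vecMulDotProductCLM x y).hasFDerivAt.comp_hasDerivAt t (hasDerivAt_exp_smul_const' M t)

theorem vecMul_exp_smul_dotProduct_of_pow (x y : ι → ℝ) (M : Matrix ι ι ℝ) {c : ℝ}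
    (h : ∀ k : ℕ, (x ᵥ* M ^ k) ⬝ᵥ y = c ^ k) (t : ℝ) :
    (x ᵥ* exp (t • M)) ⬝ᵥ y = Real.exp (c * t) := by
  refine (hasSum_vecMul_exp_smul_dotProduct x y M t).unique ?_
  rw [Real.exp_eq_exp_ℝ]
  refine (expSeries_div_hasSum_exp (c * t)).congr_fun fun k => ?_
  rw [h, mul_pow]
  ring

theorem vecMul_pow_dotProduct_of_exp (x y : ι → ℝ) (M : Matrix ι ι ℝ) {c : ℝ}
    (h : ∀ t : ℝ, 0 ≤ t → (x ᵥ* exp (t • M)) ⬝ᵥ y = Real.exp (c * t)) (k : ℕ) :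
    (x ᵥ* M ^ k) ⬝ᵥ y = c ^ k := by
  suffices ∀ k : ℕ, ∀ t : ℝ, 0 ≤ t →
      (x ᵥ* M ^ k ᵥ* exp (t • M)) ⬝ᵥ y = c ^ k * Real.exp (c * t) by
    simpa using this k 0 le_rfl
  intro k
  induction k with
  | zero => simpa using h
  | succ k ih =>
    intro t ht
    have hlhs := (hasDerivAt_vecMul_exp_smul_dotProduct (x ᵥ* M ^ k) y M t).hasDerivWithinAt
      (s := Set.Ici 0)
    rw [vecMul_vecMul, ← mul_assoc, ← pow_succ, ← vecMul_vecMul] at hlhs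
    have hrhs : HasDerivWithinAt (fun s => c ^ k * Real.exp (c * s))
        (c ^ (k + 1) * Real.exp (c * t)) (Set.Ici 0) t := by
      refine (((hasDerivAt_id t).const_mul c).exp.const_mul (c ^ k)).hasDerivWithinAt.congr_deriv ?_
      simp only [id, pow_succ]
      ring
    exact (uniqueDiffOn_Ici 0 t ht).eq_deriv _ (hlhs.congr (fun s hs => (ih s hs).symm)
      (ih t ht).symm) hrhs

end Exponential

section Augmented

variable {R : Type*} [CommRing R] {n : ℕ}

theorem of_cons_mulVec_cons (a : R) (r : Fin n → R) (D : Matrix (Fin n) (Fin n) R) (c : R)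
    (w : Fin n → R) :
    of (Fin.cons (Fin.cons a r) fun i => Fin.cons 0 (D i)) *ᵥ Fin.cons c w =
      Fin.cons (a * c + r ⬝ᵥ w) (D *ᵥ w) := by
  ext i
  refine Fin.cases ?_ (fun i => ?_) i <;> simp [mulVec, dotProduct, Fin.sum_univ_succ]

theorem of_cons_pow_mulVec_one {a c : R} {r : Fin n → R} {D : Matrix (Fin n) (Fin n) R}
    (hr : ∀ k : ℕ, r ⬝ᵥ (D ^ k *ᵥ fun _ => 1) = (c - a) * c ^ k) (k : ℕ) :
    of (Fin.cons (Fin.cons a r) fun i => Fin.cons 0 (D i)) ^ k *ᵥ (fun _ => 1) =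
      Fin.cons (c ^ k) (D ^ k *ᵥ fun _ => 1) := by
  induction k with
  | zero =>
    simp only [pow_zero, one_mulVec]
    exact (Fin.cons_self_tail _).symm
  | succ k ih =>
    rw [pow_succ', ← mulVec_mulVec, ih, of_cons_mulVec_cons, hr, mulVec_mulVec, ← pow_succ']
    congr 1
    ring

end Augmented

end Matrix

theorem reprUnitExp_iff {n : ℕ} (π : Fin n → ℝ) (D : Matrix (Fin n) (Fin n) ℝ) :
    ReprUnitExp π D ↔ ∀ k : ℕ, (π ᵥ* D ^ k) ⬝ᵥ (fun _ => 1) = (-1) ^ k := by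
  refine ⟨fun h => vecMul_pow_dotProduct_of_exp π _ D fun t ht => ?_, fun h t _ => ?_⟩
  · rw [h t ht, neg_one_mul]
  · rw [vecMul_exp_smul_dotProduct_of_pow π _ D h t, neg_one_mul]

theorem stmt10_general {n : ℕ} (π : Fin n → ℝ) (D : Matrix (Fin n) (Fin n) ℝ)
    (hrep : ReprUnitExp π D)
    (μ p : ℝ) :
    ReprUnitExp (Fin.cons p (fun i => (1 - p) * π i))
      (Matrix.of (Fin.cons (Fin.cons (-μ) (fun j => (μ - 1) * π j))
        (fun i => Fin.cons 0 (D i)))) := by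
  rw [reprUnitExp_iff] at hrep ⊢
  have hπ (k : ℕ) : π ⬝ᵥ (D ^ k *ᵥ fun _ => 1) = (-1) ^ k := by
    rw [dotProduct_mulVec, hrep]
  intro k
  rw [← dotProduct_mulVec, of_cons_pow_mulVec_one (c := -1) _ k]
  · rw [show (Fin.cons p fun i => (1 - p) * π i) = vecCons p ((1 - p) • π) from rfl,
      ← vecCons, cons_dotProduct_cons, smul_dotProduct, hπ, smul_eq_mul]
    ring
  · intro k
    rw [show (fun j => (μ - 1) * π j) = (μ - 1) • π from rfl, smul_dotProduct, hπ, smul_eq_mul]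
    ring

theorem stmt10 {n : ℕ} (π : Fin n → ℝ) (D : Matrix (Fin n) (Fin n) ℝ)
    (hπnn : ∀ i, 0 ≤ π i) (hπsum : ∑ i, π i = 1)
    (hrep : ReprUnitExp π D)
    (μ p : ℝ) (hμ : 1 ≤ μ) (hp : p ∈ Set.Icc (0 : ℝ) 1) :
    ReprUnitExp (Fin.cons p (fun i => (1 - p) * π i))
      (Matrix.of (Fin.cons (Fin.cons (-μ) (fun j => (μ - 1) * π j))
        (fun i => Fin.cons 0 (D i)))) :=
  stmt10_general π D hrep μ p
end

section
/- Let n ≥ 1 and let π_1,…,π_n, m_1,…,m_n be real numbers with Σ_{i=1}^n π_i = 1 and Σ_{i=1}^n π_i m_i = 1. Let p ∈ (0,1), q ∈ [0,1] and μ := (1−q+pq)/p. Then (1−p)·Σ_{i=1}^{n} π_i·(m_i + (1−q)/μ)² + p/μ² − 1 = (1−p)·(Σ_{i=1}^{n} π_i m_i² − 1) + p(1−p)(1−q)²/(1−q+pq)². -/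
theorem stmt12 {n : ℕ} (hn : 0 < n) (π m : Fin n → ℝ)
    (hπ : ∑ i, π i = 1) (hm : ∑ i, π i * m i = 1)
    (p q μ : ℝ) (hp : p ∈ Set.Ioo (0 : ℝ) 1) (hq : q ∈ Set.Icc (0 : ℝ) 1)
    (hμ : μ = (1 - q + p * q) / p) :
    (1 - p) * ∑ i, π i * (m i + (1 - q) / μ) ^ 2 + p / μ ^ 2 - 1
      = (1 - p) * ((∑ i, π i * m i ^ 2) - 1)
        + p * (1 - p) * (1 - q) ^ 2 / (1 - q + p * q) ^ 2 := by
  obtain ⟨hp0, hp1⟩ := hp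
  obtain ⟨hq0, hq1⟩ := hq
  have hD : 0 < 1 - q + p * q := by nlinarith
  have hμ0 : μ ≠ 0 := by rw [hμ]; positivity
  set c : ℝ := (1 - q) / μ with hc
  have h1 : ∑ i, π i * (m i + c) ^ 2
      = (∑ i, π i * m i ^ 2) + 2 * c * (∑ i, π i * m i) + c ^ 2 * ∑ i, π i := by
    rw [Finset.mul_sum, Finset.mul_sum, ← Finset.sum_add_distrib, ← Finset.sum_add_distrib]
    apply Finset.sum_congr rfl
    intro i _
    ring
  rw [h1, hm, hπ, hc, hμ]
  have hpne : p ≠ 0 := ne_of_gt hp0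
  have hDne : (1 - q + p * q) ≠ 0 := ne_of_gt hD
  field_simp
  ring
end

section
/- For every integer n ≥ 1, Σ_{i=1}^{n} (Σ_{j=i}^{n} 1/j)² = 2n − Σ_{j=1}^{n} 1/j. Equivalently, (1/n)·Σ_{i=1}^{n} (Σ_{j=i}^{n} 1/j)² − 1 = 1 − (1/n)·Σ_{j=1}^{n} 1/j. -/
open Finset

lemma aux1 (n : ℕ) : ∑ i ∈ Finset.Icc 1 n, (∑ j ∈ Finset.Icc i n, (1 : ℝ) / (j : ℝ)) = n := by
  induction n with
  | zero => simp
  | succ n ih =>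
    rw [Finset.sum_Icc_succ_top (by omega : 1 ≤ n + 1)]
    have h1 : ∀ i ∈ Finset.Icc 1 n, (∑ j ∈ Finset.Icc i (n+1), (1 : ℝ) / (j : ℝ))
        = (∑ j ∈ Finset.Icc i n, (1 : ℝ) / (j : ℝ)) + 1 / ((n:ℝ)+1) := by
      intro i hi
      rw [Finset.sum_Icc_succ_top (by simp at hi; omega : i ≤ n + 1)]
      push_cast; ring
    rw [Finset.sum_congr rfl h1, Finset.sum_add_distrib, ih, Finset.sum_const,
      Nat.card_Icc, Finset.Icc_self, Finset.sum_singleton]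
    simp only [nsmul_eq_mul]
    have hne : ((n:ℝ)+1) ≠ 0 := by positivity
    push_cast
    field_simp
    ring

lemma aux2 (n : ℕ) : ∑ i ∈ Finset.Icc 1 n, (∑ j ∈ Finset.Icc i n, (1 : ℝ) / (j : ℝ)) ^ 2
    = 2 * (n : ℝ) - ∑ j ∈ Finset.Icc 1 n, (1 : ℝ) / (j : ℝ) := by
  induction n with
  | zero => simp
  | succ n ih =>
    rw [Finset.sum_Icc_succ_top (by omega : 1 ≤ n + 1),
        Finset.sum_Icc_succ_top (by omega : 1 ≤ n + 1)]
    have h1 : ∀ i ∈ Finset.Icc 1 n, (∑ j ∈ Finset.Icc i (n+1), (1 : ℝ) / (j : ℝ)) ^ 2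
        = (∑ j ∈ Finset.Icc i n, (1 : ℝ) / (j : ℝ)) ^ 2
          + 2 * (1 / ((n:ℝ)+1)) * (∑ j ∈ Finset.Icc i n, (1 : ℝ) / (j : ℝ))
          + (1 / ((n:ℝ)+1)) ^ 2 := by
      intro i hi
      rw [Finset.sum_Icc_succ_top (by simp at hi; omega : i ≤ n + 1)]
      push_cast; ring
    rw [Finset.sum_congr rfl h1]
    simp only [Finset.sum_add_distrib, ← Finset.mul_sum]
    rw [aux1, ih, Finset.sum_const, Nat.card_Icc, Finset.Icc_self, Finset.sum_singleton]
    simp only [nsmul_eq_mul]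
    have hne : ((n:ℝ)+1) ≠ 0 := by positivity
    push_cast
    field_simp
    ring

theorem stmt16 (n : ℕ) (hn : 1 ≤ n) :
    (∑ i ∈ Finset.Icc 1 n, (∑ j ∈ Finset.Icc i n, (1 : ℝ) / (j : ℝ)) ^ 2
        = 2 * (n : ℝ) - ∑ j ∈ Finset.Icc 1 n, (1 : ℝ) / (j : ℝ)) ∧
      (1 / (n : ℝ)) * ∑ i ∈ Finset.Icc 1 n, (∑ j ∈ Finset.Icc i n, (1 : ℝ) / (j : ℝ)) ^ 2 - 1
        = 1 - (1 / (n : ℝ)) * ∑ j ∈ Finset.Icc 1 n, (1 : ℝ) / (j : ℝ) := by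
  have h := aux2 n
  refine ⟨h, ?_⟩
  have hne : (n : ℝ) ≠ 0 := by
    have : (0:ℝ) < n := by exact_mod_cast hn
    linarith
  rw [h]
  field_simp
  ring
end

section
/- Let μ_1, μ_2 > 0 and 0 ≤ β ≤ μ_1, let D := [[−μ_1, β], [0, −μ_2]], and let π ∈ ℝ² be a probability row vector such that (π, D) represents the unit exponential distribution. Set M := (−D)^{−1}, m := M·𝟙, d := −D·𝟙, ψ := π·M·diag(d) and A := π·M·M·diag(d). Then for every 2×2 real matrix ν with nonnegative entries satisfying Σ_{i} ν(i,j) = π_j for each j and Σ_{j} ν(i,j) = ψ_i for each i, and for every vector a ∈ ℝ² satisfying ψ_i · a_i = A_i for i = 1,2, one has Σ_{i=1}^{2} Σ_{j=1}^{2} ν(i,j) · a_i · m_j = 1. (Hence a Markovian arrival process with acyclic matrix D_0 of order 2 and unit exponential marginal distribution has coefficient of autocorrelation 0; order at least 3 is needed for non-zero autocorrelation.) -/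
open Matrix

/-!
Write `N = -D`. Differentiating `π exp(tD) 𝟙 = e^{-t}` repeatedly at `t = 0` gives `π Nᵏ 𝟙 = 1`,
so the functional `X ↦ π X 𝟙` sends `p(N)` to `p(1)` for every polynomial `p`. Applied to the
characteristic polynomial (Cayley–Hamilton) this makes `1` an eigenvalue of `N`, i.e. `μ₁ = 1` or
`μ₂ = 1`; writing `N⁻¹` as a polynomial in `N` it gives `π M 𝟙 = 1`, hence also `∑ ψ = ∑ A = 1`.

For a triangular `2 × 2` matrix this pins down one coordinate of either `a` or `m`: if `μ₁ = 1`
then `A₀ = ψ₀`, so `A = ψ` and `a = 1` on the support of `ψ`, and the sum is `π · m = 1`; if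
`μ₂ = 1` then `m₁ = 1`, so `m = 1` on the support of `π`, and the sum is `∑ ψᵢ aᵢ = ∑ Aᵢ = 1`.
-/

section UnitExponential

open Set

variable {n : ℕ} {π : Fin n → ℝ} {D : Matrix (Fin n) (Fin n) ℝ}

lemma eqOn_vecMul_exp_dotProduct_mulVec {v : Fin n → ℝ} {c : ℝ}
    (h : EqOn (fun t : ℝ => (π ᵥ* NormedSpace.exp (t • D)) ⬝ᵥ v) (fun t => c * Real.exp (-t))
      (Ici 0)) :
    EqOn (fun t : ℝ => (π ᵥ* NormedSpace.exp (t • D)) ⬝ᵥ (D *ᵥ v))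
      (fun t => -c * Real.exp (-t)) (Ici 0) := by
  intro t ht
  -- both derivatives are taken within `Ici t`, where the two functions agree, so `t = 0` is covered
  have hneg : HasDerivWithinAt (fun u : ℝ => (π ᵥ* NormedSpace.exp (u • D)) ⬝ᵥ v)
      (-c * Real.exp (-t)) (Ici t) t := by
    have hu : ∀ u ∈ Ici t, (π ᵥ* NormedSpace.exp (u • D)) ⬝ᵥ v = c * Real.exp (-u) :=
      fun u hu => h (mem_Ici.2 (le_trans (mem_Ici.1 ht) hu))
    refine (((hasDerivAt_neg t).exp.const_mul c).hasDerivWithinAt.congr hu (h ht)).congr_deriv ?_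
    ring
  let := Matrix.linftyOpNormedRing (n := Fin n) (α := ℝ)
  let := Matrix.linftyOpNormedAlgebra (R := ℝ) (n := Fin n) (α := ℝ)
  let L : Matrix (Fin n) (Fin n) ℝ →ₗ[ℝ] ℝ :=
    { toFun X := (π ᵥ* X) ⬝ᵥ v
      map_add' X Y := by simp only [vecMul_add, add_dotProduct]
      map_smul' r X := by simp only [vecMul_smul, smul_dotProduct, RingHom.id_apply] }
  have hexp : HasDerivWithinAt (fun u : ℝ => (π ᵥ* NormedSpace.exp (u • D)) ⬝ᵥ v)
      ((π ᵥ* NormedSpace.exp (t • D)) ⬝ᵥ (D *ᵥ v)) (Ici t) t := by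
    refine (L.toContinuousLinearMap.hasFDerivAt.comp_hasDerivAt t
      (hasDerivAt_exp_smul_const D t)).hasDerivWithinAt.congr_deriv ?_
    change (π ᵥ* (NormedSpace.exp (t • D) * D)) ⬝ᵥ v = _
    rw [← vecMul_vecMul, dotProduct_mulVec]
  exact (uniqueDiffOn_Ici t t self_mem_Ici).eq_deriv _ hexp hneg

lemma ReprUnitExp.eqOn_pow (hrep : ReprUnitExp π D) (k : ℕ) :
    EqOn (fun t : ℝ => (π ᵥ* NormedSpace.exp (t • D)) ⬝ᵥ (D ^ k *ᵥ 1))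
      (fun t => (-1) ^ k * Real.exp (-t)) (Ici 0) := by
  induction k with
  | zero =>
    intro t ht
    simp only [pow_zero, one_mulVec, one_mul]
    exact hrep t ht
  | succ k ih =>
    intro t ht
    simpa [pow_succ', ← mulVec_mulVec] using eqOn_vecMul_exp_dotProduct_mulVec ih ht

lemma ReprUnitExp.dotProduct_neg_pow_mulVec_one (hrep : ReprUnitExp π D) (k : ℕ) :
    π ⬝ᵥ ((-D) ^ k *ᵥ 1) = 1 := by
  have h := hrep.eqOn_pow k (self_mem_Ici : (0 : ℝ) ∈ Ici 0)
  simp only [zero_smul, NormedSpace.exp_zero, vecMul_one, neg_zero, Real.exp_zero,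
    mul_one] at h
  rw [← neg_one_smul ℝ D, smul_pow, smul_mulVec, dotProduct_smul, h, smul_eq_mul, ← mul_pow]
  norm_num

end UnitExponential

section MomentFunctional

open Polynomial

variable {K ι : Type*} [Field K] [Fintype ι] [DecidableEq ι] {π : ι → K} {N : Matrix ι ι K}

lemma dotProduct_aeval_mulVec_one (h : ∀ k : ℕ, π ⬝ᵥ (N ^ k *ᵥ 1) = 1) (p : K[X]) :
    π ⬝ᵥ (aeval N p *ᵥ 1) = p.eval 1 := by
  rw [aeval_eq_sum_range, eval_eq_sum_range, sum_mulVec, dotProduct_sum]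
  simp only [smul_mulVec, dotProduct_smul, h, one_pow, smul_eq_mul, mul_one]

lemma eval_one_charpoly_eq_zero (h : ∀ k : ℕ, π ⬝ᵥ (N ^ k *ᵥ 1) = 1) :
    N.charpoly.eval 1 = 0 := by
  rw [← dotProduct_aeval_mulVec_one h, aeval_self_charpoly, zero_mulVec, dotProduct_zero]

lemma dotProduct_inv_mulVec_one (h : ∀ k : ℕ, π ⬝ᵥ (N ^ k *ᵥ 1) = 1) (hN : IsUnit N.det) :
    π ⬝ᵥ (N⁻¹ *ᵥ 1) = 1 := by
  have hc : N.charpoly.coeff 0 ≠ 0 := by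
    intro hc
    rw [det_eq_sign_charpoly_coeff, hc, mul_zero] at hN
    exact not_isUnit_zero hN
  have hsplit := divX_mul_X_add N.charpoly
  set c := N.charpoly.coeff 0
  set q := N.charpoly.divX
  have hq : aeval N q = -c • N⁻¹ := by
    have hCH := aeval_self_charpoly N
    rw [← hsplit, map_add, map_mul, aeval_X, aeval_C, Algebra.algebraMap_eq_smul_one] at hCH
    rw [← mul_nonsing_inv_cancel_right _ (aeval N q) hN, eq_neg_of_add_eq_zero_left hCH,
      neg_mul, smul_one_mul, neg_smul]
  have hq1 : q.eval 1 = -c := by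
    have h1 := eval_one_charpoly_eq_zero h
    rw [← hsplit, eval_add, eval_mul, eval_X, eval_C, mul_one] at h1
    exact eq_neg_of_add_eq_zero_left h1
  have hqN := dotProduct_aeval_mulVec_one h q
  rw [hq, hq1, smul_mulVec, dotProduct_smul, smul_eq_mul] at hqN
  exact (mul_eq_left₀ (neg_ne_zero.2 hc)).1 hqN

lemma sum_vecMul_mul_diagonal_mulVec_one (π : ι → K) (B N : Matrix ι ι K) :
    ∑ i, (π ᵥ* (B * diagonal (N *ᵥ 1))) i = π ⬝ᵥ ((B * N) *ᵥ 1) := by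
  rw [← dotProduct_one, ← dotProduct_mulVec, ← mulVec_mulVec, ← mulVec_mulVec]
  congr 2
  ext i
  simp [mulVec_diagonal]

lemma sum_vecMul_inv_mul_diagonal (h : π ⬝ᵥ 1 = 1) (hN : IsUnit N.det) :
    ∑ i, (π ᵥ* (N⁻¹ * diagonal (N *ᵥ 1))) i = 1 := by
  rw [sum_vecMul_mul_diagonal_mulVec_one, nonsing_inv_mul _ hN, one_mulVec, h]

lemma sum_vecMul_inv_mul_inv_mul_diagonal (h : ∀ k : ℕ, π ⬝ᵥ (N ^ k *ᵥ 1) = 1)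
    (hN : IsUnit N.det) : ∑ i, (π ᵥ* (N⁻¹ * N⁻¹ * diagonal (N *ᵥ 1))) i = 1 := by
  rw [sum_vecMul_mul_diagonal_mulVec_one, Matrix.mul_assoc, nonsing_inv_mul _ hN, mul_one,
    dotProduct_inv_mulVec_one h hN]

end MomentFunctional

section TransportPlan

variable {R ι κ : Type*} [Field R] [LinearOrder R] [IsStrictOrderedRing R] [Fintype ι]
  {ν : Matrix ι κ R} {ψ a : ι → R} {π m : κ → R}

lemma mul_eq_self_of_sum_col_eq (hν : ∀ i j, 0 ≤ ν i j) (hcol : ∀ j, ∑ i, ν i j = π j)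
    (hm : ∀ j, π j * m j = π j) (i : ι) (j : κ) : ν i j * m j = ν i j := by
  by_cases hπ : π j = 0
  · have hνij : ν i j = 0 :=
      (Finset.sum_eq_zero_iff_of_nonneg fun i _ => hν i j).1 ((hcol j).trans hπ) i
        (Finset.mem_univ i)
    rw [hνij, zero_mul]
  · rw [(mul_eq_left₀ hπ).1 (hm j), mul_one]

lemma sum_sum_mul_mul_eq_of_col [Fintype κ] (hν : ∀ i j, 0 ≤ ν i j)
    (hcol : ∀ j, ∑ i, ν i j = π j) (hrow : ∀ i, ∑ j, ν i j = ψ i)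
    (hm : ∀ j, π j * m j = π j) :
    ∑ i, ∑ j, ν i j * a i * m j = ∑ i, ψ i * a i := by
  refine Finset.sum_congr rfl fun i _ => ?_
  rw [← hrow i, Finset.sum_mul]
  refine Finset.sum_congr rfl fun j _ => ?_
  rw [mul_right_comm, mul_eq_self_of_sum_col_eq hν hcol hm]

lemma sum_sum_mul_mul_eq_of_row [Fintype κ] (hν : ∀ i j, 0 ≤ ν i j)
    (hcol : ∀ j, ∑ i, ν i j = π j) (hrow : ∀ i, ∑ j, ν i j = ψ i)
    (ha : ∀ i, ψ i * a i = ψ i) :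
    ∑ i, ∑ j, ν i j * a i * m j = ∑ j, π j * m j := by
  rw [Finset.sum_comm, ← sum_sum_mul_mul_eq_of_col (ν := νᵀ) (fun j i => hν i j) hrow hcol ha]
  simp only [transpose_apply, mul_right_comm]

end TransportPlan

lemma inv_upperTriangular_fin_two {K : Type*} [Field K] {a c : K} (b : K) (ha : a ≠ 0)
    (hc : c ≠ 0) : !![a, b; 0, c]⁻¹ = !![a⁻¹, -b / (a * c); 0, c⁻¹] := by
  refine inv_eq_left_inv ?_
  ext i j
  fin_cases i <;> fin_cases j <;> simp [field]

lemma eq_of_apply_eq_of_sum_eq_fin_two {R : Type*} [AddCommGroup R] {u v : Fin 2 → R}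
    (i : Fin 2) (hi : u i = v i) (hsum : ∑ j, u j = ∑ j, v j) : u = v := by
  rw [Fin.sum_univ_two, Fin.sum_univ_two] at hsum
  refine funext (Fin.forall_fin_two.2 ?_)
  fin_cases i
  · exact ⟨hi, add_left_cancel (hsum.trans (congrArg (· + v 1) hi.symm))⟩
  · exact ⟨add_right_cancel (hsum.trans (congrArg (v 0 + ·) hi.symm)), hi⟩

theorem stmt17_general (μ₁ μ₂ β : ℝ) (hμ₁ : 0 < μ₁) (hμ₂ : 0 < μ₂)
    (D : Matrix (Fin 2) (Fin 2) ℝ) (hD : D = !![-μ₁, β; 0, -μ₂])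
    (π : Fin 2 → ℝ)
    (hrep : ReprUnitExp π D)
    (M : Matrix (Fin 2) (Fin 2) ℝ) (hM : M = (-D)⁻¹)
    (m d ψ A : Fin 2 → ℝ)
    (hm : m = M *ᵥ (fun _ => 1)) (hd : d = (-D) *ᵥ (fun _ => 1))
    (hψ : ψ = π ᵥ* (M * Matrix.diagonal d))
    (hA : A = π ᵥ* (M * M * Matrix.diagonal d))
    (ν : Matrix (Fin 2) (Fin 2) ℝ) (hνnn : ∀ i j, 0 ≤ ν i j)
    (hνcol : ∀ j, ∑ i, ν i j = π j) (hνrow : ∀ i, ∑ j, ν i j = ψ i)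
    (a : Fin 2 → ℝ) (ha : ∀ i, ψ i * a i = A i) :
    ∑ i, ∑ j, ν i j * a i * m j = 1 := by
  have hN : -D = !![μ₁, -β; 0, μ₂] := by
    rw [hD]; ext i j; fin_cases i <;> fin_cases j <;> simp
  have hmom := hrep.dotProduct_neg_pow_mulVec_one
  have hdet : IsUnit (-D).det := by simp [hN, hμ₁.ne', hμ₂.ne']
  have hMex : M = !![μ₁⁻¹, β / (μ₁ * μ₂); 0, μ₂⁻¹] := by
    rw [hM, hN, inv_upperTriangular_fin_two _ hμ₁.ne' hμ₂.ne', neg_neg]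
  have hπsum : ∑ j, π j = 1 := by simpa using hmom 0
  have hmean : ∑ j, π j * m j = 1 := by
    rw [hm, hM]; exact dotProduct_inv_mulVec_one hmom hdet
  have hψsum : ∑ i, ψ i = 1 := by
    rw [hψ, hd, hM]; exact sum_vecMul_inv_mul_diagonal (by simpa using hmom 0) hdet
  have hAsum : ∑ i, A i = 1 := by
    rw [hA, hd, hM]; exact sum_vecMul_inv_mul_inv_mul_diagonal hmom hdet
  have heig : (1 - μ₁) * (1 - μ₂) = 0 := by
    simpa [eval_charpoly, hN, det_fin_two] using eval_one_charpoly_eq_zero hmom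
  rcases mul_eq_zero.1 heig with h₁ | h₂
  · have hAψ : A = ψ := eq_of_apply_eq_of_sum_eq_fin_two 0
      (by simp [hA, hψ, hMex, vecMul, dotProduct, Fin.sum_univ_two, show μ₁ = 1 by linarith])
      (hAsum.trans hψsum.symm)
    rw [sum_sum_mul_mul_eq_of_row hνnn hνcol hνrow fun i => (ha i).trans (congrFun hAψ i), hmean]
  · have hπm : (fun j => π j * m j) = π := eq_of_apply_eq_of_sum_eq_fin_two 1
      (by simp [hm, hMex, dotProduct, Fin.sum_univ_two, show μ₂ = 1 by linarith])
      (hmean.trans hπsum.symm)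
    rw [sum_sum_mul_mul_eq_of_col hνnn hνcol hνrow (congrFun hπm), ← hAsum]
    exact Finset.sum_congr rfl fun i _ => ha i

theorem stmt17 (μ₁ μ₂ β : ℝ) (hμ₁ : 0 < μ₁) (hμ₂ : 0 < μ₂)
    (hβ0 : 0 ≤ β) (hβ : β ≤ μ₁)
    (D : Matrix (Fin 2) (Fin 2) ℝ) (hD : D = !![-μ₁, β; 0, -μ₂])
    (π : Fin 2 → ℝ) (hπnn : ∀ i, 0 ≤ π i) (hπsum : ∑ i, π i = 1)
    (hrep : ReprUnitExp π D)
    (M : Matrix (Fin 2) (Fin 2) ℝ) (hM : M = (-D)⁻¹)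
    (m d ψ A : Fin 2 → ℝ)
    (hm : m = M *ᵥ (fun _ => 1)) (hd : d = (-D) *ᵥ (fun _ => 1))
    (hψ : ψ = π ᵥ* (M * Matrix.diagonal d))
    (hA : A = π ᵥ* (M * M * Matrix.diagonal d))
    (ν : Matrix (Fin 2) (Fin 2) ℝ) (hνnn : ∀ i j, 0 ≤ ν i j)
    (hνcol : ∀ j, ∑ i, ν i j = π j) (hνrow : ∀ i, ∑ j, ν i j = ψ i)
    (a : Fin 2 → ℝ) (ha : ∀ i, ψ i * a i = A i) :
    ∑ i, ∑ j, ν i j * a i * m j = 1 :=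
  stmt17_general μ₁ μ₂ β hμ₁ hμ₂ D hD π hrep M hM m d ψ A hm hd hψ hA ν hνnn hνcol hνrow a ha
end

section
/- Let N ≥ 1, let π ∈ ℝᴺ be a probability vector and let μ_1, …, μ_N > 0. Set E(T) := Σ_i π_i/μ_i, E(T²) := 2·Σ_i π_i/μ_i² and σ² := E(T²) − E(T)², and assume σ² > 0. Let (ρ_k)_{k≥1} be defined by ρ_1 = 0 and ρ_{k+1} = ρ_k + (1−ρ_k)²/4. For a function n : {1,…,N} → ℕ≥1 define F(n) := (Σ_{i=1}^N π_i·ρ_{n(i)}/μ_i² + E(T²)/2 − E(T)²)/σ². Then F(n) → 1 as all n(i) → ∞; precisely, for every ε > 0 there exists K such that whenever n(i) ≥ K for all i, |F(n) − 1| < ε. -/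
/-! The gap `g k = 1 - ρ k` obeys `g (k + 1) = g k - g k ^ 2 / 4` with `g 1 = 1`; since
`x ↦ x - x ^ 2 / 4` is increasing on `[0, 2]` and maps `4 / (k + 3)` below `4 / (k + 4)`,
induction gives `0 ≤ g k ≤ 4 / (k + 3)`. On the other hand `F(n) - 1` equals
`-(∑ i, π i / μ i ^ 2 * g (n i)) / σ²`, so it is at most `4 / (K + 3) · E(T²) / (2 σ²)` in
absolute value once every `n i ≥ K`. -/

open Finset Set

theorem sub_sq_div_four_le_sub_sq_div_four {a b : ℝ} (hab : a ≤ b) (hb : b ≤ 2) :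
    a - a ^ 2 / 4 ≤ b - b ^ 2 / 4 := by
  nlinarith [mul_nonneg (sub_nonneg.mpr hab) (by linarith : (0 : ℝ) ≤ 4 - (a + b))]

theorem four_div_add_three_sub_sq_le {x : ℝ} (hx : 0 ≤ x) :
    4 / (x + 3) - (4 / (x + 3)) ^ 2 / 4 ≤ 4 / (x + 4) := by
  rw [div_pow, div_div, sub_le_iff_le_add, div_add_div _ _ (by positivity) (by positivity),
    div_le_div_iff₀ (by positivity) (by positivity)]
  nlinarith [sq_nonneg (x + 3)]

theorem one_sub_mem_Icc_of_rec {ρ : ℕ → ℝ} (hρ1 : ρ 1 = 0)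
    (hρ : ∀ k, 1 ≤ k → ρ (k + 1) = ρ k + (1 - ρ k) ^ 2 / 4) {k : ℕ} (hk : 1 ≤ k) :
    1 - ρ k ∈ Icc 0 (4 / ((k : ℝ) + 3)) := by
  induction k, hk using Nat.le_induction with
  | base => norm_num [hρ1]
  | succ k hk ih =>
    obtain ⟨hg0, hgle⟩ := ih
    have hk' : (1 : ℝ) ≤ k := Nat.one_le_cast.mpr hk
    have hb : 4 / ((k : ℝ) + 3) ≤ 1 := by rw [div_le_one (by positivity)]; linarith
    have hstep : 1 - ρ (k + 1) = (1 - ρ k) - (1 - ρ k) ^ 2 / 4 := by rw [hρ k hk]; ring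
    rw [hstep, Nat.cast_succ]
    constructor
    · nlinarith
    · calc (1 - ρ k) - (1 - ρ k) ^ 2 / 4
          ≤ 4 / ((k : ℝ) + 3) - (4 / ((k : ℝ) + 3)) ^ 2 / 4 :=
            sub_sq_div_four_le_sub_sq_div_four hgle (by linarith)
        _ ≤ 4 / ((k : ℝ) + 4) := four_div_add_three_sub_sq_le (by positivity)
        _ = 4 / ((k : ℝ) + 1 + 3) := by ring

theorem abs_sum_mul_le_of_mem_Icc {ι : Type*} [Fintype ι] {w g : ι → ℝ} {δ : ℝ}
    (hw : ∀ i, 0 ≤ w i) (hg : ∀ i, g i ∈ Icc 0 δ) :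
    |∑ i, w i * g i| ≤ δ * ∑ i, w i := by
  rw [abs_of_nonneg (sum_nonneg fun i _ => mul_nonneg (hw i) (hg i).1), mul_sum]
  exact sum_le_sum fun i _ => by rw [mul_comm δ]; exact mul_le_mul_of_nonneg_left (hg i).2 (hw i)

theorem div_sub_one_eq_neg_sum_div {ι : Type*} [Fintype ι] {π μ r : ι → ℝ} {E₁ E₂ V : ℝ}
    (hE₂ : E₂ = 2 * ∑ i, π i / μ i ^ 2) (hV : V = E₂ - E₁ ^ 2) (hV0 : V ≠ 0) :
    (∑ i, π i * r i / μ i ^ 2 + E₂ / 2 - E₁ ^ 2) / V - 1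
      = -(∑ i, π i / μ i ^ 2 * (1 - r i)) / V := by
  have hsum : ∑ i, π i / μ i ^ 2 * (1 - r i) = ∑ i, π i / μ i ^ 2 - ∑ i, π i * r i / μ i ^ 2 := by
    rw [← sum_sub_distrib]
    exact sum_congr rfl fun i _ => by ring
  rw [hsum, div_sub_one hV0, hV, hE₂]
  ring

theorem stmt19_general {N : ℕ} (π μ : Fin N → ℝ)
    (hπnn : ∀ i, 0 ≤ π i)
    (E₁ E₂ V : ℝ) (hE₂ : E₂ = 2 * ∑ i, π i / μ i ^ 2)
    (hV : V = E₂ - E₁ ^ 2) (hVpos : 0 < V)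
    (ρ : ℕ → ℝ) (hρ1 : ρ 1 = 0)
    (hρ : ∀ k, 1 ≤ k → ρ (k + 1) = ρ k + (1 - ρ k) ^ 2 / 4) :
    ∀ ε > 0, ∃ K : ℕ, 1 ≤ K ∧ ∀ m : Fin N → ℕ, (∀ i, K ≤ m i) →
      |(∑ i, π i * ρ (m i) / μ i ^ 2 + E₂ / 2 - E₁ ^ 2) / V - 1| < ε := by
  intro ε hε
  set S := ∑ i, π i / μ i ^ 2
  have hw : ∀ i, 0 ≤ π i / μ i ^ 2 := fun i => div_nonneg (hπnn i) (sq_nonneg _)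
  obtain ⟨K, hK⟩ := exists_nat_gt (4 * S / (V * ε))
  refine ⟨K + 1, le_add_self, fun m hm => ?_⟩
  have hgap : ∀ i, 1 - ρ (m i) ∈ Icc 0 (4 / ((K : ℝ) + 1)) := fun i => by
    obtain ⟨hg0, hgle⟩ := one_sub_mem_Icc_of_rec hρ1 hρ (le_add_self.trans (hm i))
    have hKm : (K : ℝ) + 1 ≤ m i := by exact_mod_cast hm i
    exact ⟨hg0, hgle.trans (div_le_div_of_nonneg_left (by norm_num) (by positivity) (by linarith))⟩
  have hKV : 4 * S < ((K : ℝ) + 1) * (V * ε) := by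
    rw [div_lt_iff₀ (by positivity)] at hK
    nlinarith [mul_pos hVpos hε]
  rw [div_sub_one_eq_neg_sum_div hE₂ hV hVpos.ne', abs_div, abs_neg, abs_of_pos hVpos,
    div_lt_iff₀ hVpos]
  calc |∑ i, π i / μ i ^ 2 * (1 - ρ (m i))| ≤ 4 / ((K : ℝ) + 1) * S :=
        abs_sum_mul_le_of_mem_Icc hw hgap
    _ < ε * V := by
        rw [div_mul_eq_mul_div, div_lt_iff₀ (by positivity)]
        linarith

theorem stmt19 {N : ℕ} (hN : 0 < N) (π μ : Fin N → ℝ)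
    (hπnn : ∀ i, 0 ≤ π i) (hπsum : ∑ i, π i = 1) (hμ : ∀ i, 0 < μ i)
    (E₁ E₂ V : ℝ) (hE₁ : E₁ = ∑ i, π i / μ i) (hE₂ : E₂ = 2 * ∑ i, π i / μ i ^ 2)
    (hV : V = E₂ - E₁ ^ 2) (hVpos : 0 < V)
    (ρ : ℕ → ℝ) (hρ1 : ρ 1 = 0)
    (hρ : ∀ k, 1 ≤ k → ρ (k + 1) = ρ k + (1 - ρ k) ^ 2 / 4) :
    ∀ ε > 0, ∃ K : ℕ, 1 ≤ K ∧ ∀ m : Fin N → ℕ, (∀ i, K ≤ m i) →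
      |(∑ i, π i * ρ (m i) / μ i ^ 2 + E₂ / 2 - E₁ ^ 2) / V - 1| < ε :=
  stmt19_general π μ hπnn E₁ E₂ V hE₂ hV hVpos ρ hρ1 hρ
end
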